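/- arXiv:2405.06521 — 15 statements merged into one kernel-verified Lean document; each statement's English description precedes it below -/
import Mathlib

section
/- Let L₁ be a noncommutative Lie algebra over a field F and let A be a finite-dimensional abelian Lie algebra over F, and let L = L₁ × A be the product Lie algebra. Then the commuting graph Γ(L) is connected if and only if the commuting graph Γ(L₁) is connected, and moreover diam(Γ(L)) = diam(Γ(L₁)) (as elements of ℕ∞). -/
/-- The product of two Lie rings, with componentwise bracket. -/
instance prodLieRing (L₁ L₂ : Type*) [LieRing L₁] [LieRing L₂] : LieRing (L₁ × L₂) where
  bracket x y := (⁅x.1, y.1⁆, ⁅x.2, y.2⁆)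
  add_lie x y z := by ext <;> exact add_lie ..
  lie_add x y z := by ext <;> exact lie_add ..
  lie_self x := by ext <;> exact lie_self ..
  leibniz_lie x y z := by ext <;> exact leibniz_lie ..

/-- The product of two Lie algebras, with componentwise bracket. -/
instance prodLieAlgebra (F : Type*) [CommRing F] (L₁ L₂ : Type*) [LieRing L₁] [LieRing L₂]
    [LieAlgebra F L₁] [LieAlgebra F L₂] : LieAlgebra F (L₁ × L₂) where
  lie_smul t x y := by ext <;> exact lie_smul ..

/-- The commuting graph of a Lie algebra `L` over `F`: vertices are the elements of
`L` outside the center, and two distinct vertices are adjacent iff they commute. -/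
def commutingGraph (F : Type*) [CommRing F] (L : Type*) [LieRing L] [LieAlgebra F L] :
    SimpleGraph {x : L // x ∉ LieAlgebra.center F L} where
  Adj x y := x ≠ y ∧ ⁅(x : L), (y : L)⁆ = 0
  symm := ⟨fun x y h => ⟨h.1.symm, by rw [← lie_skew, h.2, neg_zero]⟩⟩
  loopless := ⟨fun x h => h.1 rfl⟩

/-!
Forgetting the abelian factor maps `Γ(L₁ × A)` onto `Γ(L₁)`; since `A` is abelian, two vertices
commute iff their first coordinates do. So `Γ(L₁ × A)` is `Γ(L₁)` with every vertex blown up to a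
clique: a walk downstairs lifts to a walk of the same length between any chosen points of the end
fibres, and a walk upstairs projects to one no longer. Distances between distinct fibres are thus
those of `Γ(L₁)`, and distances within a fibre are at most `1`, which does not exceed `diam Γ(L₁)`
since a noncentral element fails to commute with some other noncentral element.
-/

namespace SimpleGraph

variable {V W : Type*} {G : SimpleGraph V} {H : SimpleGraph W}

/-- `G` arises from `H` by replacing each vertex `w` with a nonempty clique, the fibre of `f`
over `w`. -/
structure IsCliqueBlowup (G : SimpleGraph V) (H : SimpleGraph W) (f : V → W) : Prop where
  surjective : Function.Surjective f
  adj_iff {u v : V} : G.Adj u v ↔ u ≠ v ∧ (f u = f v ∨ H.Adj (f u) (f v))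

theorem Hom.edist_map_le (g : H →g G) (a b : W) : G.edist (g a) (g b) ≤ H.edist a b :=
  le_iInf fun p => (edist_le (p.map g)).trans_eq (by rw [Walk.length_map])

theorem edist_map_le_of_adj {f : V → W} (hf : ∀ {u v}, G.Adj u v → f u = f v ∨ H.Adj (f u) (f v))
    (u v : V) : H.edist (f u) (f v) ≤ G.edist u v := by
  refine le_iInf fun p => ?_
  induction p with
  | nil => simp
  | @cons u w v huw p ih =>
    have hstep : H.edist (f u) (f w) ≤ 1 :=
      edist_le_one_iff_adj_or_eq.2 (hf huw).symm
    calc H.edist (f u) (f v) ≤ H.edist (f u) (f w) + H.edist (f w) (f v) := H.edist_triangle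
      _ ≤ 1 + p.length := add_le_add hstep ih
      _ = (p.cons huw).length := by rw [Walk.length_cons]; push_cast; ring

namespace IsCliqueBlowup

variable {f : V → W} (hB : G.IsCliqueBlowup H f)
include hB

theorem edist_le_one_of_map_eq {u v : V} (h : f u = f v) : G.edist u v ≤ 1 := by
  refine edist_le_one_iff_adj_or_eq.2 ?_
  by_cases huv : u = v
  · exact Or.inr huv
  · exact Or.inl (hB.adj_iff.2 ⟨huv, Or.inl h⟩)

theorem edist_map_le (u v : V) : H.edist (f u) (f v) ≤ G.edist u v :=
  edist_map_le_of_adj (fun h => (hB.adj_iff.1 h).2) u v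

theorem exists_hom_apply_eq {u v : V} (h : f u ≠ f v) :
    ∃ g : H →g G, g (f u) = u ∧ g (f v) = v := by
  have hlift : ∀ w, ∃ x, f x = w ∧ (w = f u → x = u) ∧ (w = f v → x = v) := by
    intro w
    by_cases hu : w = f u
    · exact ⟨u, hu.symm, fun _ => rfl, fun hv => absurd (hu.symm.trans hv) h⟩
    by_cases hv : w = f v
    · exact ⟨v, hv.symm, fun hu' => absurd hu' hu, fun _ => rfl⟩
    obtain ⟨x, hx⟩ := hB.surjective w
    exact ⟨x, hx, fun hu' => absurd hu' hu, fun hv' => absurd hv' hv⟩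
  choose g hfg hgu hgv using hlift
  refine ⟨⟨g, fun {a b} hab => hB.adj_iff.2 ⟨?_, Or.inr ?_⟩⟩, hgu _ rfl, hgv _ rfl⟩
  · exact fun hg => hab.ne (by rw [← hfg a, ← hfg b, hg])
  · rwa [hfg, hfg]

theorem edist_eq_of_map_ne {u v : V} (h : f u ≠ f v) : G.edist u v = H.edist (f u) (f v) := by
  obtain ⟨g, hgu, hgv⟩ := hB.exists_hom_apply_eq h
  refine le_antisymm ?_ (hB.edist_map_le u v)
  simpa only [hgu, hgv] using g.edist_map_le (f u) (f v)

theorem reachable_iff {u v : V} : G.Reachable u v ↔ H.Reachable (f u) (f v) := by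
  simp only [← edist_ne_top_iff_reachable]
  by_cases h : f u = f v
  · rw [h, edist_self]
    exact iff_of_true (ne_top_of_le_ne_top ENat.one_ne_top (hB.edist_le_one_of_map_eq h))
      ENat.zero_ne_top
  · rw [hB.edist_eq_of_map_ne h]

theorem connected_iff : G.Connected ↔ H.Connected := by
  simp only [SimpleGraph.connected_iff, Preconnected, hB.reachable_iff,
    hB.surjective.forall₂]
  exact and_congr_right fun _ => ⟨Nonempty.map f, fun _ => hB.surjective.nonempty⟩

theorem ediam_eq (hW : ∀ w : W, ∃ w', w' ≠ w) : G.ediam = H.ediam := by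
  refine le_antisymm (ediam_le_of_edist_le fun u v => ?_) (ediam_le_of_edist_le fun w w' => ?_)
  · by_cases h : f u = f v
    · obtain ⟨w, hw⟩ := hW (f u)
      calc G.edist u v ≤ 1 := hB.edist_le_one_of_map_eq h
        _ ≤ H.edist (f u) w := Order.one_le_iff_pos.2 (edist_pos_of_ne hw.symm)
        _ ≤ H.ediam := edist_le_ediam
    · exact (hB.edist_eq_of_map_ne h).trans_le edist_le_ediam
  · obtain ⟨u, rfl⟩ := hB.surjective w
    obtain ⟨v, rfl⟩ := hB.surjective w'
    exact (hB.edist_map_le u v).trans edist_le_ediam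

end IsCliqueBlowup

end SimpleGraph

section CommutingGraph

open LieAlgebra

variable {R : Type*} [CommRing R] {L : Type*} [LieRing L] [LieAlgebra R L]

theorem Prod.lie_def {M : Type*} [LieRing M] (u v : L × M) :
    ⁅u, v⁆ = (⁅u.1, v.1⁆, ⁅u.2, v.2⁆) :=
  rfl

theorem LieAlgebra.mem_center_prod_iff {M : Type*} [LieRing M] [LieAlgebra R M] {u : L × M} :
    u ∈ center R (L × M) ↔ u.1 ∈ center R L ∧ u.2 ∈ center R M := by
  simp only [center, LieModule.mem_maxTrivSubmodule, Prod.forall, Prod.lie_def, Prod.mk_eq_zero]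
  exact ⟨fun h => ⟨fun x => (h x 0).1, fun y => (h 0 y).2⟩, fun h x y => ⟨h.1 x, h.2 y⟩⟩

theorem commutingGraph_lie_eq_zero_iff {x y : {x : L // x ∉ center R L}} :
    ⁅(x : L), (y : L)⁆ = 0 ↔ x = y ∨ (commutingGraph R L).Adj x y := by
  refine ⟨fun h => ?_, ?_⟩
  · by_cases hxy : x = y
    · exact Or.inl hxy
    · exact Or.inr ⟨hxy, h⟩
  · rintro (rfl | h)
    · exact lie_self _
    · exact h.2

theorem commutingGraph_exists_ne (x : {x : L // x ∉ center R L}) : ∃ y, y ≠ x := by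
  obtain ⟨y, hyx⟩ : ∃ y : L, ⁅y, (x : L)⁆ ≠ 0 := by
    simpa only [center, LieModule.mem_maxTrivSubmodule, not_forall] using x.2
  have hy : y ∉ center R L := fun hy => hyx (by
    rw [← lie_skew, (LieModule.mem_maxTrivSubmodule R L L y).1 hy, neg_zero])
  exact ⟨⟨y, hy⟩, fun h => hyx (by rw [← congrArg Subtype.val h, lie_self])⟩

variable {A : Type*} [LieRing A] [LieAlgebra R A] [IsLieAbelian A]

theorem LieAlgebra.mem_center_prod_iff_fst {u : L × A} :
    u ∈ center R (L × A) ↔ u.1 ∈ center R L := by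
  rw [mem_center_prod_iff, (isLieAbelian_iff_center_eq_top R A).1 inferInstance]
  exact and_iff_left (LieSubmodule.mem_top _)

theorem isCliqueBlowup_commutingGraph_prod :
    (commutingGraph R (L × A)).IsCliqueBlowup (commutingGraph R L)
      fun u => ⟨u.1.1, fun h => u.2 (mem_center_prod_iff_fst.2 h)⟩ where
  surjective x := ⟨⟨(x.1, 0), fun h => x.2 (mem_center_prod_iff_fst.1 h)⟩, rfl⟩
  adj_iff {u v} := by
    rw [← commutingGraph_lie_eq_zero_iff]
    change u ≠ v ∧ ⁅(u : L × A), (v : L × A)⁆ = 0 ↔ _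
    rw [Prod.lie_def, trivial_lie_zero A A, Prod.mk_eq_zero, and_iff_left rfl]

end CommutingGraph

theorem stmt0_general (F : Type*) [Field F]
    (L₁ : Type*) [LieRing L₁] [LieAlgebra F L₁]
    (A : Type*) [LieRing A] [LieAlgebra F A] [IsLieAbelian A] :
    ((commutingGraph F (L₁ × A)).Connected ↔ (commutingGraph F L₁).Connected) ∧
      (commutingGraph F (L₁ × A)).ediam = (commutingGraph F L₁).ediam :=
  ⟨isCliqueBlowup_commutingGraph_prod.connected_iff,
    isCliqueBlowup_commutingGraph_prod.ediam_eq commutingGraph_exists_ne⟩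

/-- if `L₁` is a noncommutative Lie algebra over a field `F` and `A` is a
finite-dimensional abelian Lie algebra over `F`, then the commuting graph of `L₁ × A` is
connected iff that of `L₁` is, and the two commuting graphs have the same diameter. -/
theorem stmt0 (F : Type*) [Field F]
    (L₁ : Type*) [LieRing L₁] [LieAlgebra F L₁]
    (A : Type*) [LieRing A] [LieAlgebra F A] [IsLieAbelian A] [Module.Finite F A]
    (hnc : ∃ x y : L₁, ⁅x, y⁆ ≠ 0) :
    ((commutingGraph F (L₁ × A)).Connected ↔ (commutingGraph F L₁).Connected) ∧
      (commutingGraph F (L₁ × A)).ediam = (commutingGraph F L₁).ediam :=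
  stmt0_general F L₁ A
end

section
/- Let L₁ and L₂ be noncommutative Lie algebras over a field F and let L = L₁ × L₂ be the product Lie algebra. Then the commuting graph Γ(L) is connected and diam(Γ(L)) ≤ 3. -/
/-! In `L₁ × L₂` every element `(x₁, x₂)` commutes with some vertex `(a, 0)` (take `a = x₁`
if `x₁` is not central, any noncentral `a` otherwise) and with some vertex `(0, b)`, and
all vertices `(a, 0)` and `(0, b)` commute with each other. So any two vertices `u, v` are
joined by a path `u — (a, 0) — (0, b) — v` of length at most 3. -/

namespace LieAlgebra

variable {R : Type*} [CommRing R]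

lemma notMem_center_of_lie_ne_zero {L : Type*} [LieRing L] [LieAlgebra R L] {x y : L}
    (h : ⁅x, y⁆ ≠ 0) : y ∉ center R L :=
  fun hy => h ((LieModule.mem_maxTrivSubmodule R L L y).mp hy x)

lemma exists_notMem_center_lie_eq_zero {L : Type*} [LieRing L] [LieAlgebra R L]
    (hnc : ∃ x y : L, ⁅x, y⁆ ≠ 0) (x : L) : ∃ a ∉ center R L, ⁅x, a⁆ = 0 := by
  by_cases hx : x ∈ center R L
  · obtain ⟨u, v, huv⟩ := hnc
    refine ⟨v, notMem_center_of_lie_ne_zero huv, ?_⟩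
    rw [← lie_skew, (LieModule.mem_maxTrivSubmodule R L L x).mp hx v, neg_zero]
  · exact ⟨x, hx, lie_self x⟩

variable {L₁ L₂ : Type*} [LieRing L₁] [LieAlgebra R L₁] [LieRing L₂] [LieAlgebra R L₂]

lemma mem_center_prod_iff_s1 (z : L₁ × L₂) :
    z ∈ center R (L₁ × L₂) ↔ z.1 ∈ center R L₁ ∧ z.2 ∈ center R L₂ := by
  simp only [center, LieModule.mem_maxTrivSubmodule]
  refine ⟨fun h => ⟨fun x => congrArg Prod.fst (h (x, 0)), fun x => congrArg Prod.snd (h (0, x))⟩,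
    fun h x => Prod.ext (h.1 x.1) (h.2 x.2)⟩

lemma prod_notMem_center_of_fst {z : L₁ × L₂} (h : z.1 ∉ center R L₁) :
    z ∉ center R (L₁ × L₂) :=
  fun hz => h ((mem_center_prod_iff_s1 z).mp hz).1

lemma prod_notMem_center_of_snd {z : L₁ × L₂} (h : z.2 ∉ center R L₂) :
    z ∉ center R (L₁ × L₂) :=
  fun hz => h ((mem_center_prod_iff_s1 z).mp hz).2

end LieAlgebra

namespace commutingGraph

open LieAlgebra

variable {R : Type*} [CommRing R]

lemma edist_le_one_of_lie_eq_zero {L : Type*} [LieRing L] [LieAlgebra R L]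
    {u v : {x : L // x ∉ center R L}} (h : ⁅(u : L), (v : L)⁆ = 0) :
    (commutingGraph R L).edist u v ≤ 1 :=
  SimpleGraph.edist_le_one_iff_adj_or_eq.mpr ((em (u = v)).symm.imp (fun hne => ⟨hne, h⟩) id)

variable {L₁ L₂ : Type*} [LieRing L₁] [LieAlgebra R L₁] [LieRing L₂] [LieAlgebra R L₂]

lemma prod_edist_le_three (hnc₁ : ∃ x y : L₁, ⁅x, y⁆ ≠ 0) (hnc₂ : ∃ x y : L₂, ⁅x, y⁆ ≠ 0)
    (u v : {z : L₁ × L₂ // z ∉ center R (L₁ × L₂)}) :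
    (commutingGraph R (L₁ × L₂)).edist u v ≤ 3 := by
  obtain ⟨a, ha, hua⟩ := exists_notMem_center_lie_eq_zero (R := R) hnc₁ (u : L₁ × L₂).1
  obtain ⟨b, hb, hvb⟩ := exists_notMem_center_lie_eq_zero (R := R) hnc₂ (v : L₁ × L₂).2
  let A : {z : L₁ × L₂ // z ∉ center R (L₁ × L₂)} := ⟨(a, 0), prod_notMem_center_of_fst ha⟩
  let B : {z : L₁ × L₂ // z ∉ center R (L₁ × L₂)} := ⟨(0, b), prod_notMem_center_of_snd hb⟩
  set G := commutingGraph R (L₁ × L₂)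
  have huA : G.edist u A ≤ 1 :=
    edist_le_one_of_lie_eq_zero (Prod.ext hua (lie_zero _))
  have hAB : G.edist A B ≤ 1 :=
    edist_le_one_of_lie_eq_zero (Prod.ext (lie_zero a) (zero_lie b))
  have hBv : G.edist B v ≤ 1 := by
    rw [SimpleGraph.edist_comm]
    exact edist_le_one_of_lie_eq_zero (Prod.ext (lie_zero _) hvb)
  calc G.edist u v ≤ G.edist u A + G.edist A B + G.edist B v :=
        SimpleGraph.edist_triangle.trans (add_le_add_left SimpleGraph.edist_triangle _)
    _ ≤ 1 + 1 + 1 := by gcongr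
    _ = 3 := by norm_num

end commutingGraph

/-- if `L₁` and `L₂` are noncommutative Lie algebras over a field `F`, then the
commuting graph of the product Lie algebra `L₁ × L₂` is connected with diameter at most 3. -/
theorem stmt1 (F : Type*) [Field F]
    (L₁ : Type*) [LieRing L₁] [LieAlgebra F L₁]
    (L₂ : Type*) [LieRing L₂] [LieAlgebra F L₂]
    (hnc₁ : ∃ x y : L₁, ⁅x, y⁆ ≠ 0) (hnc₂ : ∃ x y : L₂, ⁅x, y⁆ ≠ 0) :
    (commutingGraph F (L₁ × L₂)).Connected ∧ (commutingGraph F (L₁ × L₂)).ediam ≤ 3 := by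
  have hdiam : (commutingGraph F (L₁ × L₂)).ediam ≤ 3 :=
    SimpleGraph.ediam_le_of_edist_le (commutingGraph.prod_edist_le_three hnc₁ hnc₂)
  obtain ⟨_, y, hxy⟩ := hnc₁
  have : Nonempty {z : L₁ × L₂ // z ∉ LieAlgebra.center F (L₁ × L₂)} :=
    ⟨⟨(y, 0), LieAlgebra.prod_notMem_center_of_fst (LieAlgebra.notMem_center_of_lie_ne_zero hxy)⟩⟩
  exact ⟨SimpleGraph.connected_of_ediam_ne_top (ne_top_of_le_ne_top (by decide) hdiam), hdiam⟩
end

section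
/- Let F be a field and L a Lie algebra over F admitting a basis e₁, e₂, e₃, e₄ whose brackets satisfy ⁅e₁,e₂⁆ = e₂, ⁅e₃,e₄⁆ = e₄, and ⁅e₁,e₃⁆ = ⁅e₁,e₄⁆ = ⁅e₂,e₃⁆ = ⁅e₂,e₄⁆ = 0. Then the commuting graph Γ(L) is connected and diam(Γ(L)) = 3. -/
open LieAlgebra SimpleGraph

section CommutingGraph

variable {F : Type*} [CommRing F] {L : Type*} [LieRing L] [LieAlgebra F L]

lemma commutingGraph_edist_le_one {x y : {x : L // x ∉ center F L}}
    (h : ⁅(x : L), (y : L)⁆ = 0) : (commutingGraph F L).edist x y ≤ 1 := by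
  rw [edist_le_one_iff_adj_or_eq]
  by_cases hxy : x = y
  · exact Or.inr hxy
  · exact Or.inl ⟨hxy, h⟩

lemma two_lt_commutingGraph_edist {x y : {x : L // x ∉ center F L}}
    (hxy : ⁅(x : L), (y : L)⁆ ≠ 0)
    (hcenter : ∀ z : L, ⁅(x : L), z⁆ = 0 → ⁅(y : L), z⁆ = 0 → z ∈ center F L) :
    2 < (commutingGraph F L).edist x y := by
  refine two_lt_edist_iff.mpr ⟨?_, fun h ↦ hxy h.2, ?_⟩
  · rintro rfl
    exact hxy (lie_self _)
  · refine Set.eq_empty_of_forall_notMem fun z hz ↦ ?_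
    rw [mem_commonNeighbors] at hz
    exact z.2 (hcenter z hz.1.2 hz.2.2)

variable {I J : Submodule F L}

lemma commutingGraph_edist_le_three_of_components (hIJ : ∀ i ∈ I, ∀ j ∈ J, ⁅i, j⁆ = 0)
    {x y : {x : L // x ∉ center F L}} {x₁ x₂ y₁ y₂ : L}
    (hx₁ : x₁ ∈ I) (hx₂ : x₂ ∈ J) (hy₁ : y₁ ∈ I) (hy₂ : y₂ ∈ J)
    (hx : x₁ + x₂ = x) (hy : y₁ + y₂ = y) (hx₁c : x₁ ∉ center F L) (hy₂c : y₂ ∉ center F L) :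
    (commutingGraph F L).edist x y ≤ 3 := by
  set G := commutingGraph F L
  let u : {x : L // x ∉ center F L} := ⟨x₁, hx₁c⟩
  let v : {x : L // x ∉ center F L} := ⟨y₂, hy₂c⟩
  have hxu : G.edist x u ≤ 1 := commutingGraph_edist_le_one <| by
    rw [← hx, add_lie, lie_self, zero_add, ← lie_skew, hIJ _ hx₁ _ hx₂, neg_zero]
  have huv : G.edist u v ≤ 1 := commutingGraph_edist_le_one (hIJ _ hx₁ _ hy₂)
  have hvy : G.edist v y ≤ 1 := commutingGraph_edist_le_one <| by
    rw [← hy, lie_add, lie_self, add_zero, ← lie_skew, hIJ _ hy₁ _ hy₂, neg_zero]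
  calc G.edist x y ≤ G.edist x u + G.edist u v + G.edist v y :=
        G.edist_triangle.trans (add_le_add_left G.edist_triangle _)
    _ ≤ 1 + 1 + 1 := by gcongr
    _ = 3 := by norm_num

lemma commutingGraph_edist_le_two_of_mem (hIJ : ∀ i ∈ I, ∀ j ∈ J, ⁅i, j⁆ = 0)
    {x y : {x : L // x ∉ center F L}} (hx : (x : L) ∈ I) (hy : (y : L) ∈ I)
    {j : L} (hj : j ∈ J) (hjc : j ∉ center F L) :
    (commutingGraph F L).edist x y ≤ 2 := by
  set G := commutingGraph F L
  let w : {x : L // x ∉ center F L} := ⟨j, hjc⟩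
  have hxw : G.edist x w ≤ 1 := commutingGraph_edist_le_one (hIJ _ hx _ hj)
  have hwy : G.edist w y ≤ 1 := commutingGraph_edist_le_one <| by
    rw [← lie_skew, hIJ _ hy _ hj, neg_zero]
  calc G.edist x y ≤ G.edist x w + G.edist w y := G.edist_triangle
    _ ≤ 1 + 1 := by gcongr
    _ = 2 := by norm_num

theorem commutingGraph_edist_le_three (hIJ : ∀ i ∈ I, ∀ j ∈ J, ⁅i, j⁆ = 0) (hsup : I ⊔ J = ⊤)
    (hI : I ≠ ⊥) (hJ : J ≠ ⊥) (hZ : center F L = ⊥) (x y : {x : L // x ∉ center F L}) :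
    (commutingGraph F L).edist x y ≤ 3 := by
  have hJI : ∀ j ∈ J, ∀ i ∈ I, ⁅j, i⁆ = 0 := fun j hj i hi ↦ by
    rw [← lie_skew, hIJ i hi j hj, neg_zero]
  have hnc : ∀ {z : L}, z ≠ 0 → z ∉ center F L := by simp [hZ]
  have hx0 : (x : L) ≠ 0 := fun h ↦ x.2 (h ▸ zero_mem _)
  have hy0 : (y : L) ≠ 0 := fun h ↦ y.2 (h ▸ zero_mem _)
  obtain ⟨x₁, hx₁, x₂, hx₂, hx⟩ := Submodule.mem_sup.mp (hsup ▸ Submodule.mem_top (x := (x : L)))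
  obtain ⟨y₁, hy₁, y₂, hy₂, hy⟩ := Submodule.mem_sup.mp (hsup ▸ Submodule.mem_top (x := (y : L)))
  obtain ⟨i, hi, hi0⟩ := Submodule.exists_mem_ne_zero_of_ne_bot hI
  obtain ⟨j, hj, hj0⟩ := Submodule.exists_mem_ne_zero_of_ne_bot hJ
  rcases eq_or_ne x₁ 0 with rfl | hx₁0
  · rw [zero_add] at hx
    rcases eq_or_ne y₁ 0 with rfl | hy₁0
    · rw [zero_add] at hy
      exact (commutingGraph_edist_le_two_of_mem hJI (hx ▸ hx₂) (hy ▸ hy₂) hi (hnc hi0)).trans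
        (by norm_num)
    · exact commutingGraph_edist_le_three_of_components hJI hx₂ (zero_mem _) hy₂ hy₁
        (by rw [add_zero, hx]) (by rw [add_comm, hy]) (hnc (hx ▸ hx0)) (hnc hy₁0)
  rcases eq_or_ne y₂ 0 with rfl | hy₂0
  · rw [add_zero] at hy
    rcases eq_or_ne x₂ 0 with rfl | hx₂0
    · rw [add_zero] at hx
      exact (commutingGraph_edist_le_two_of_mem hIJ (hx ▸ hx₁) (hy ▸ hy₁) hj (hnc hj0)).trans
        (by norm_num)
    · exact commutingGraph_edist_le_three_of_components hJI hx₂ hx₁ (zero_mem _) hy₁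
        (by rw [add_comm, hx]) (by rw [zero_add, hy]) (hnc hx₂0) (hnc (hy ▸ hy0))
  exact commutingGraph_edist_le_three_of_components hIJ hx₁ hx₂ hy₁ hy₂ hx hy (hnc hx₁0) (hnc hy₂0)

end CommutingGraph

lemma Module.Basis.span_image_sup_span_image_eq_top {ι R M : Type*} [Semiring R] [AddCommMonoid M]
    [Module R M] (b : Module.Basis ι R M) {s t : Set ι} (hst : s ∪ t = Set.univ) :
    Submodule.span R (b '' s) ⊔ Submodule.span R (b '' t) = ⊤ := by
  rw [← Submodule.span_union, ← Set.image_union, hst, Set.image_univ, b.span_eq]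

lemma Module.Basis.span_image_ne_bot {ι R M : Type*} [Semiring R] [Nontrivial R] [AddCommMonoid M]
    [Module R M] (b : Module.Basis ι R M) {s : Set ι} (hs : s.Nonempty) :
    Submodule.span R (b '' s) ≠ ⊥ := by
  obtain ⟨i, hi⟩ := hs
  rw [Ne, Submodule.span_eq_bot]
  exact fun h ↦ b.ne_zero i (h _ (Set.mem_image_of_mem b hi))

/-- `b` is the standard basis `e₁, e₂, e₃, e₄` of `n₂,₁ ⊕ n₂,₁`, indexed from `0`. -/
structure IsStdBasisNSumN {F : Type*} [CommRing F] {L : Type*} [LieRing L] [LieAlgebra F L]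
    (b : Module.Basis (Fin 4) F L) : Prop where
  lie_zero_one : ⁅b 0, b 1⁆ = b 1
  lie_two_three : ⁅b 2, b 3⁆ = b 3
  lie_zero_two : ⁅b 0, b 2⁆ = 0
  lie_zero_three : ⁅b 0, b 3⁆ = 0
  lie_one_two : ⁅b 1, b 2⁆ = 0
  lie_one_three : ⁅b 1, b 3⁆ = 0

namespace IsStdBasisNSumN

variable {F : Type*} [CommRing F] {L : Type*} [LieRing L] [LieAlgebra F L]
  {b : Module.Basis (Fin 4) F L} (hb : IsStdBasisNSumN b)
include hb

lemma lie_eq (x y : L) :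
    ⁅x, y⁆ = (b.repr x 0 * b.repr y 1 - b.repr x 1 * b.repr y 0) • b 1
      + (b.repr x 2 * b.repr y 3 - b.repr x 3 * b.repr y 2) • b 3 := by
  have h10 : ⁅b 1, b 0⁆ = -b 1 := by rw [← lie_skew, hb.lie_zero_one]
  have h32 : ⁅b 3, b 2⁆ = -b 3 := by rw [← lie_skew, hb.lie_two_three]
  have h20 : ⁅b 2, b 0⁆ = 0 := by rw [← lie_skew, hb.lie_zero_two, neg_zero]
  have h30 : ⁅b 3, b 0⁆ = 0 := by rw [← lie_skew, hb.lie_zero_three, neg_zero]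
  have h21 : ⁅b 2, b 1⁆ = 0 := by rw [← lie_skew, hb.lie_one_two, neg_zero]
  have h31 : ⁅b 3, b 1⁆ = 0 := by rw [← lie_skew, hb.lie_one_three, neg_zero]
  conv_lhs => rw [← b.sum_repr x, ← b.sum_repr y]
  simp only [Fin.sum_univ_four, add_lie, lie_add, smul_lie, lie_smul, lie_self, hb.lie_zero_one,
    hb.lie_two_three, hb.lie_zero_two, hb.lie_zero_three, hb.lie_one_two, hb.lie_one_three,
    h10, h32, h20, h30, h21, h31, smul_zero, smul_neg, add_zero, zero_add]
  module

lemma lie_eq_zero_iff (x y : L) :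
    ⁅x, y⁆ = 0 ↔ b.repr x 0 * b.repr y 1 - b.repr x 1 * b.repr y 0 = 0 ∧
      b.repr x 2 * b.repr y 3 - b.repr x 3 * b.repr y 2 = 0 := by
  rw [hb.lie_eq]
  refine ⟨fun h ↦ ⟨?_, ?_⟩, fun ⟨h₁, h₃⟩ ↦ by rw [h₁, h₃, zero_smul, zero_smul, add_zero]⟩
  · simpa [Finsupp.single_apply] using congrArg (b.repr · 1) h
  · simpa [Finsupp.single_apply] using congrArg (b.repr · 3) h

lemma center_eq_bot : center F L = ⊥ := by
  refine (LieSubmodule.eq_bot_iff _).mpr fun x hx ↦ b.ext_elem fun i ↦ ?_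
  rw [LieModule.mem_maxTrivSubmodule] at hx
  have h₁ : b.repr x 1 = 0 := by simpa using ((hb.lie_eq_zero_iff _ x).mp (hx (b 0))).1
  have h₀ : b.repr x 0 = 0 := by simpa using ((hb.lie_eq_zero_iff _ x).mp (hx (b 1))).1
  have h₃ : b.repr x 3 = 0 := by simpa using ((hb.lie_eq_zero_iff _ x).mp (hx (b 2))).2
  have h₂ : b.repr x 2 = 0 := by simpa using ((hb.lie_eq_zero_iff _ x).mp (hx (b 3))).2
  fin_cases i <;> simp [h₀, h₁, h₂, h₃]

lemma lie_eq_zero_of_mem_span_of_mem_span {i j : L}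
    (hi : i ∈ Submodule.span F (b '' {0, 1})) (hj : j ∈ Submodule.span F (b '' {2, 3})) :
    ⁅i, j⁆ = 0 := by
  rw [Module.Basis.mem_span_image] at hi hj
  have hi' : ∀ k, k ∉ ({0, 1} : Set (Fin 4)) → b.repr i k = 0 :=
    fun k hk ↦ Finsupp.notMem_support_iff.mp fun h ↦ hk (hi h)
  have hj' : ∀ k, k ∉ ({2, 3} : Set (Fin 4)) → b.repr j k = 0 :=
    fun k hk ↦ Finsupp.notMem_support_iff.mp fun h ↦ hk (hj h)
  rw [hb.lie_eq_zero_iff, hi' 2 (by decide), hi' 3 (by decide), hj' 0 (by decide),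
    hj' 1 (by decide)]
  simp

lemma eq_zero_of_lie_eq_zero_of_lie_eq_zero {z : L} (h₀₂ : ⁅b 0 + b 2, z⁆ = 0)
    (h₁₃ : ⁅b 1 + b 3, z⁆ = 0) : z = 0 := by
  obtain ⟨h₁, h₃⟩ : b.repr z 1 = 0 ∧ b.repr z 3 = 0 := by
    simpa using (hb.lie_eq_zero_iff _ _).mp h₀₂
  obtain ⟨h₀, h₂⟩ : b.repr z 0 = 0 ∧ b.repr z 2 = 0 := by
    simpa using (hb.lie_eq_zero_iff _ _).mp h₁₃
  exact b.ext_elem fun i ↦ by fin_cases i <;> simp [h₀, h₁, h₂, h₃]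

end IsStdBasisNSumN

/-- for a Lie algebra over a field `F` with basis `e₁, e₂, e₃, e₄` satisfying
`⁅e₁,e₂⁆ = e₂`, `⁅e₃,e₄⁆ = e₄` and all cross brackets zero (the direct sum of two copies of
the nonabelian 2-dimensional Lie algebra), the commuting graph is connected of diameter 3. -/
theorem stmt2 (F : Type*) [Field F] (L : Type*) [LieRing L] [LieAlgebra F L]
    (b : Module.Basis (Fin 4) F L)
    (h12 : ⁅b 0, b 1⁆ = b 1) (h34 : ⁅b 2, b 3⁆ = b 3)
    (h13 : ⁅b 0, b 2⁆ = 0) (h14 : ⁅b 0, b 3⁆ = 0)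
    (h23 : ⁅b 1, b 2⁆ = 0) (h24 : ⁅b 1, b 3⁆ = 0) :
    (commutingGraph F L).Connected ∧ (commutingGraph F L).ediam = 3 := by
  have hb : IsStdBasisNSumN b := ⟨h12, h34, h13, h14, h23, h24⟩
  have hnc : ∀ {z : L}, z ≠ 0 → z ∉ center F L := by simp [hb.center_eq_bot]
  have hle : ∀ u v, (commutingGraph F L).edist u v ≤ 3 :=
    commutingGraph_edist_le_three (fun _ hi _ hj ↦ hb.lie_eq_zero_of_mem_span_of_mem_span hi hj)
      (b.span_image_sup_span_image_eq_top (s := {0, 1}) (t := {2, 3})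
        (by ext i; fin_cases i <;> simp))
      (b.span_image_ne_bot (by simp)) (b.span_image_ne_bot (by simp)) hb.center_eq_bot
  have hdiam : (commutingGraph F L).ediam ≤ 3 := ediam_le_of_edist_le hle
  have : Nonempty {x : L // x ∉ center F L} := ⟨⟨b 0, hnc (b.ne_zero 0)⟩⟩
  refine ⟨connected_of_ediam_ne_top (hdiam.trans_lt (by decide)).ne, hdiam.antisymm ?_⟩
  have hu : b 0 + b 2 ≠ 0 := fun h ↦ by simpa using congrArg (b.repr · 0) h
  have hv : b 1 + b 3 ≠ 0 := fun h ↦ by simpa using congrArg (b.repr · 1) h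
  let u : {x : L // x ∉ center F L} := ⟨b 0 + b 2, hnc hu⟩
  let v : {x : L // x ∉ center F L} := ⟨b 1 + b 3, hnc hv⟩
  have huv : 2 < (commutingGraph F L).edist u v := by
    refine two_lt_commutingGraph_edist ?_ fun z h₀₂ h₁₃ ↦ ?_
    · change ⁅b 0 + b 2, b 1 + b 3⁆ ≠ 0
      rw [Ne, hb.lie_eq_zero_iff]
      simp
    · rw [hb.eq_zero_of_lie_eq_zero_of_lie_eq_zero h₀₂ h₁₃]
      exact zero_mem _
  calc (3 : ℕ∞) = 2 + 1 := by norm_num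
    _ ≤ (commutingGraph F L).edist u v := Order.add_one_le_of_lt huv
    _ ≤ (commutingGraph F L).ediam := edist_le_ediam
end

section
/- Let L be an indecomposable noncommutative finite-dimensional Lie algebra over a field F with center Z(L). If there exists x ∈ L such that dim ker(ad x) = dim Z(L) + 1, then the commuting graph Γ(L) is disconnected. -/
open LieAlgebra Module

theorem SimpleGraph.Connected.forall_of_adj {V : Type*} {G : SimpleGraph V} (hG : G.Connected)
    {P : V → Prop} (hP : ∀ u v, G.Adj u v → P u → P v) {u : V} (hu : P u) (v : V) : P v := by
  obtain ⟨p⟩ := hG.preconnected u v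
  induction p with
  | nil => exact hu
  | cons hadj _ ih => exact ih (hP _ _ hadj hu)

theorem Submodule.eq_sup_span_singleton_of_finrank_eq_succ {K V : Type*} [DivisionRing K]
    [AddCommGroup V] [Module K V] {Z M : Submodule K V} [FiniteDimensional K M] (hZM : Z ≤ M)
    {x : V} (hxM : x ∈ M) (hxZ : x ∉ Z) (h : finrank K M = finrank K Z + 1) :
    M = Z ⊔ K ∙ x := by
  have hle : Z ⊔ K ∙ x ≤ M := sup_le hZM ((Submodule.span_singleton_le_iff_mem x M).mpr hxM)
  have hlt : Z < Z ⊔ K ∙ x :=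
    lt_of_le_of_ne le_sup_left fun hEq =>
      hxZ (hEq ▸ Submodule.mem_sup_right (Submodule.mem_span_singleton_self x))
  have : FiniteDimensional K ↥(Z ⊔ K ∙ x) := Submodule.finiteDimensional_of_le hle
  have := Submodule.finrank_lt_finrank_of_lt hlt
  exact (Submodule.eq_of_le_of_finrank_le hle (by omega)).symm

section

variable {F L : Type*} [Field F] [LieRing L] [LieAlgebra F L]

theorem LieAlgebra.center_sup_span_le_ker_ad (x : L) :
    (center F L).toSubmodule ⊔ F ∙ x ≤ LinearMap.ker (ad F L x) :=
  sup_le (fun _ hz => hz x) ((Submodule.span_singleton_le_iff_mem _ _).mpr (lie_self x))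

theorem LieAlgebra.lie_eq_zero_of_mem_center_sup_span {x u w : L}
    (hu : u ∈ (center F L).toSubmodule ⊔ F ∙ x) (huZ : u ∉ center F L) (huw : ⁅u, w⁆ = 0) :
    ⁅x, w⁆ = 0 := by
  obtain ⟨z, hz, _, hcx, rfl⟩ := Submodule.mem_sup.mp hu
  obtain ⟨c, rfl⟩ := Submodule.mem_span_singleton.mp hcx
  have hc : c ≠ 0 := by
    rintro rfl
    exact huZ (by simpa using hz)
  have hzw : ⁅z, w⁆ = 0 := by rw [← lie_skew, hz w, neg_zero]
  rw [add_lie, hzw, zero_add, smul_lie] at huw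
  exact (smul_eq_zero.mp huw).resolve_left hc

theorem LieAlgebra.isLieAbelian_of_finrank_eq_finrank_center_add_one [Module.Finite F L]
    (h : finrank F L = finrank F (center F L).toSubmodule + 1) : IsLieAbelian L := by
  refine ⟨fun a b => ?_⟩
  by_cases ha : a ∈ center F L
  · rw [← lie_skew, ha b, neg_zero]
  have htop : (⊤ : Submodule F L) = (center F L).toSubmodule ⊔ F ∙ a :=
    Submodule.eq_sup_span_singleton_of_finrank_eq_succ le_top Submodule.mem_top ha
      (by rwa [finrank_top])
  exact center_sup_span_le_ker_ad a (htop ▸ Submodule.mem_top)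

end

theorem stmt5_general (F : Type*) [Field F] (L : Type*) [LieRing L] [LieAlgebra F L]
    [Module.Finite F L]
    (hnc : ∃ x y : L, ⁅x, y⁆ ≠ 0)
    (hx : ∃ x : L, Module.finrank F (LinearMap.ker (LieAlgebra.ad F L x)) =
      Module.finrank F (LieAlgebra.center F L).toSubmodule + 1) :
    ¬ (commutingGraph F L).Connected := by
  intro hconn
  obtain ⟨x, hdim⟩ := hx
  suffices hK : LinearMap.ker (ad F L x) = ⊤ by
    have := isLieAbelian_of_finrank_eq_finrank_center_add_one (F := F) (L := L)
      (by rw [← finrank_top F L, ← hK, hdim])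
    obtain ⟨a, b, hab⟩ := hnc
    exact hab (trivial_lie_zero L L a b)
  rw [eq_top_iff]
  intro y _
  rw [LinearMap.mem_ker, ad_apply]
  by_cases hxZ : x ∈ center F L
  · rw [← lie_skew, hxZ y, neg_zero]
  by_cases hy : y ∈ center F L
  · exact hy x
  have hKeq := Submodule.eq_sup_span_singleton_of_finrank_eq_succ
    (le_sup_left.trans (center_sup_span_le_ker_ad x)) (lie_self x) hxZ hdim
  exact hconn.forall_of_adj (P := fun v => ⁅x, (v : L)⁆ = 0)
    (fun u w huw hu => lie_eq_zero_of_mem_center_sup_span (hKeq ▸ hu) u.2 huw.2)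
    (u := ⟨x, hxZ⟩) (lie_self x) ⟨y, hy⟩

/-- if `L` is an indecomposable noncommutative finite-dimensional Lie algebra
and for some `x ∈ L` the kernel of `ad x` has dimension `dim Z(L) + 1`, then the commuting
graph of `L` is disconnected. -/
theorem stmt5 (F : Type*) [Field F] (L : Type*) [LieRing L] [LieAlgebra F L]
    [Module.Finite F L]
    (hnc : ∃ x y : L, ⁅x, y⁆ ≠ 0)
    (hind : ¬ ∃ I J : LieIdeal F L, I ≠ ⊥ ∧ J ≠ ⊥ ∧ I ⊓ J = ⊥ ∧ I ⊔ J = ⊤)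
    (hx : ∃ x : L, Module.finrank F (LinearMap.ker (LieAlgebra.ad F L x)) =
      Module.finrank F (LieAlgebra.center F L).toSubmodule + 1) :
    ¬ (commutingGraph F L).Connected :=
  stmt5_general F L hnc hx
end

section
/- Let L be a noncommutative Lie algebra over a field F with dim L ≤ 3. Then the commuting graph Γ(L) is disconnected. -/
open Module LieAlgebra

def IsCommTransitive (F : Type*) [CommRing F] (L : Type*) [LieRing L] [LieAlgebra F L] :
    Prop :=
  ∀ ⦃x a b : L⦄, x ∉ center F L → ⁅x, a⁆ = 0 → ⁅x, b⁆ = 0 → ⁅a, b⁆ = 0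

section

variable {F : Type*} [Field F] {L : Type*} [LieRing L] [LieAlgebra F L]

lemma notMem_center_of_lie_ne_zero_left {x y : L} (h : ⁅x, y⁆ ≠ 0) : x ∉ center F L :=
  fun hx => h (by rw [← lie_skew, (LieModule.mem_maxTrivSubmodule F L L x).mp hx y, neg_zero])

lemma notMem_center_of_lie_ne_zero_right {x y : L} (h : ⁅x, y⁆ ≠ 0) : y ∉ center F L :=
  fun hy => h ((LieModule.mem_maxTrivSubmodule F L L y).mp hy x)

lemma eq_zero_and_eq_zero_of_lie_smul_add_smul {a b : L} (hab : ⁅a, b⁆ ≠ 0) {c d : F}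
    (ha : ⁅c • a + d • b, a⁆ = 0) (hb : ⁅c • a + d • b, b⁆ = 0) : c = 0 ∧ d = 0 := by
  simp only [add_lie, smul_lie, lie_self, smul_zero, add_zero, zero_add] at ha hb
  rw [← lie_skew, smul_neg, neg_eq_zero] at ha
  exact ⟨(smul_eq_zero.mp hb).resolve_right hab, (smul_eq_zero.mp ha).resolve_right hab⟩

lemma linearIndependent_pair_of_lie_ne_zero {a b : L} (hab : ⁅a, b⁆ ≠ 0) :
    LinearIndependent F ![a, b] :=
  LinearIndependent.pair_iff.mpr fun _ _ h =>
    eq_zero_and_eq_zero_of_lie_smul_add_smul hab (by rw [h, zero_lie]) (by rw [h, zero_lie])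

lemma eq_zero_of_mem_span_pair_of_lie_eq_zero {a b x : L} (hab : ⁅a, b⁆ ≠ 0)
    (hx : x ∈ Submodule.span F {a, b}) (ha : ⁅x, a⁆ = 0) (hb : ⁅x, b⁆ = 0) : x = 0 := by
  obtain ⟨c, d, rfl⟩ := Submodule.mem_span_pair.mp hx
  obtain ⟨rfl, rfl⟩ := eq_zero_and_eq_zero_of_lie_smul_add_smul hab ha hb
  simp

lemma isCommTransitive_of_finrank_le_three [FiniteDimensional F L] (hdim : finrank F L ≤ 3) :
    IsCommTransitive F L := by
  intro x a b hx ha hb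
  by_contra hab
  let C := LinearMap.ker (ad F L x)
  have hC : C ≠ ⊤ := fun h => hx <| (LieModule.mem_maxTrivSubmodule F L L x).mpr fun y => by
    have hy : y ∈ C := h ▸ Submodule.mem_top
    rw [← lie_skew, ← ad_apply F, LinearMap.mem_ker.mp hy, neg_zero]
  have hspan : Submodule.span F {a, b} = C := by
    refine Submodule.eq_of_le_of_finrank_le ?_ ?_
    · rw [Submodule.span_le, Set.insert_subset_iff, Set.singleton_subset_iff]
      exact ⟨ha, hb⟩
    · have h2 := finrank_span_eq_card (linearIndependent_pair_of_lie_ne_zero (F := F) hab)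
      rw [Matrix.range_cons_cons_empty, Fintype.card_fin] at h2
      have := Submodule.finrank_lt hC
      omega
  have hxC : x ∈ C := lie_self x
  rw [← hspan] at hxC
  exact hx (eq_zero_of_mem_span_pair_of_lie_eq_zero hab hxC ha hb ▸ zero_mem _)

lemma IsCommTransitive.lie_eq_zero_of_reachable (hct : IsCommTransitive F L)
    {u v : {x : L // x ∉ center F L}} (h : (commutingGraph F L).Reachable u v) :
    ⁅(u : L), (v : L)⁆ = 0 := by
  obtain ⟨w⟩ := h
  induction w with
  | nil => exact lie_self _
  | @cons _ q _ huv _ ih => exact hct q.prop (by rw [← lie_skew, huv.2, neg_zero]) ih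

end

/-- a noncommutative Lie algebra of dimension at most 3 has a
disconnected commuting graph. -/
theorem stmt7 (F : Type*) [Field F] (L : Type*) [LieRing L] [LieAlgebra F L]
    (hnc : ∃ x y : L, ⁅x, y⁆ ≠ 0) (hdim : Module.rank F L ≤ 3) :
    ¬ (commutingGraph F L).Connected := by
  obtain ⟨x, y, hxy⟩ := hnc
  have : FiniteDimensional F L :=
    Module.rank_lt_aleph0_iff.mp (hdim.trans_lt Cardinal.natCast_lt_aleph0)
  have hct := isCommTransitive_of_finrank_le_three (finrank_le_of_rank_le hdim)
  intro hconn
  exact hxy <| hct.lie_eq_zero_of_reachable <| hconn.preconnected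
    ⟨x, notMem_center_of_lie_ne_zero_left hxy⟩ ⟨y, notMem_center_of_lie_ne_zero_right hxy⟩
end

section
/- Let L be a noncommutative Lie algebra over a field F with vertex set V = L \ Z(L), and let N : Set(V→sets) be the closed-neighborhood operator N(S) = {y ∈ L \ Z(L) : ∃ s ∈ S, ⁅y, s⁆ = 0}. Let S be a nonempty subset of V such that the subgraph of Γ(L) induced by S is connected, and suppose there is an integer d ≥ 1 with N^{d−1}(S) ⊊ N^{d}(S) = N^{d+1}(S) (the series of closed neighborhoods of S terminates at d, where N⁰(S) = S and N^{k}(S) = N(N^{k−1}(S))). Then Γ(L) is connected if and only if N^{d}(S) = V; moreover, if N^{d}(S) = V then diam(Γ(L)) ≤ 2d + diam(Γ(S)), where Γ(S) is the subgraph of Γ(L) induced by S and diameters are taken in ℕ∞. -/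
/-- The closed neighborhood operator on subsets of the vertex set of the commuting graph:
`nbhd F L S` consists of the non-central elements commuting with some element of `S`
(it contains `S` whenever `S` consists of non-central elements, since `⁅s,s⁆ = 0`). -/
def nbhd (F : Type*) [CommRing F] (L : Type*) [LieRing L] [LieAlgebra F L] (S : Set L) :
    Set L :=
  {y : L | y ∉ LieAlgebra.center F L ∧ ∃ s ∈ S, ⁅y, s⁆ = 0}

/-!
Every vertex of `N^k(S)` lies within distance `k` of `S`, so if `N^d(S)` exhausts the vertices,
any two of them are joined through `S` by a path of length at most `d + diam Γ(S) + d`.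
Conversely, `N^d(S) = N^{d+1}(S)` says that `N^d(S)` is closed under adjacency, hence a union of
connected components; when `Γ(L)` is connected it therefore contains every vertex.
-/

namespace SimpleGraph

variable {V W : Type*} {G : SimpleGraph V} {G' : SimpleGraph W}

lemma Hom.edist_le (f : G →g G') (u v : V) : G'.edist (f u) (f v) ≤ G.edist u v := by
  by_cases huv : G.Reachable u v
  · obtain ⟨w, hw⟩ := huv.exists_walk_length_eq_edist
    calc G'.edist (f u) (f v) ≤ (w.map f).length := SimpleGraph.edist_le _
      _ = G.edist u v := by rw [Walk.length_map, hw]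
  · rw [edist_eq_top_of_not_reachable huv]
    exact le_top

lemma edist_le_ediam_induce {s : Set V} {a b : V} (ha : a ∈ s) (hb : b ∈ s) :
    G.edist a b ≤ (G.induce s).ediam :=
  ((Embedding.induce s).toHom.edist_le ⟨a, ha⟩ ⟨b, hb⟩).trans edist_le_ediam

lemma ediam_le_two_mul_add_ediam_induce {s : Set V} {d : ℕ∞}
    (h : ∀ v, ∃ a ∈ s, G.edist v a ≤ d) : G.ediam ≤ 2 * d + (G.induce s).ediam := by
  refine ediam_le_of_edist_le fun u v => ?_
  obtain ⟨a, ha, hua⟩ := h u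
  obtain ⟨b, hb, hvb⟩ := h v
  calc G.edist u v ≤ G.edist u a + G.edist a b + G.edist b v :=
        G.edist_triangle.trans (add_le_add_left G.edist_triangle _)
    _ ≤ d + (G.induce s).ediam + d := by
        gcongr
        · exact edist_le_ediam_induce ha hb
        · rwa [edist_comm]
    _ = 2 * d + (G.induce s).ediam := by ring

lemma connected_of_induce_connected {s : Set V} (hs : (G.induce s).Connected)
    (h : ∀ v, ∃ a ∈ s, G.Reachable v a) : G.Connected := by
  have hreach_s {a b : V} (ha : a ∈ s) (hb : b ∈ s) : G.Reachable a b :=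
    (hs.preconnected ⟨a, ha⟩ ⟨b, hb⟩).map (Embedding.induce s).toHom
  obtain ⟨⟨a₀, -⟩⟩ := hs.nonempty
  refine (connected_iff G).mpr ⟨fun u v => ?_, ⟨a₀⟩⟩
  obtain ⟨a, ha, hua⟩ := h u
  obtain ⟨b, hb, hvb⟩ := h v
  exact hua.trans ((hreach_s ha hb).trans hvb.symm)

end SimpleGraph

section CommutingGraph

variable {F : Type*} [CommRing F] {L : Type*} [LieRing L] [LieAlgebra F L] {S : Set L}

lemma nbhd_subset_noncentral (S : Set L) :
    nbhd F L S ⊆ {x : L | x ∉ LieAlgebra.center F L} := fun _ h => h.1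

lemma subset_nbhd (hS : S ⊆ {x : L | x ∉ LieAlgebra.center F L}) : S ⊆ nbhd F L S :=
  fun s hs => ⟨hS hs, s, hs, lie_self s⟩

lemma iterate_nbhd_subset_noncentral (hS : S ⊆ {x : L | x ∉ LieAlgebra.center F L}) :
    ∀ k, (nbhd F L)^[k] S ⊆ {x : L | x ∉ LieAlgebra.center F L}
  | 0 => hS
  | k + 1 => by
    rw [Function.iterate_succ_apply']
    exact nbhd_subset_noncentral _

lemma subset_iterate_nbhd (hS : S ⊆ {x : L | x ∉ LieAlgebra.center F L}) :
    ∀ k, S ⊆ (nbhd F L)^[k] S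
  | 0 => subset_rfl
  | k + 1 => by
    rw [Function.iterate_succ_apply']
    exact (subset_iterate_nbhd hS k).trans (subset_nbhd (iterate_nbhd_subset_noncentral hS k))

lemma exists_edist_le_of_mem_iterate_nbhd (hS : S ⊆ {x : L | x ∉ LieAlgebra.center F L})
    (k : ℕ) (v : {x : L // x ∉ LieAlgebra.center F L}) (hv : (v : L) ∈ (nbhd F L)^[k] S) :
    ∃ s ∈ {v : {x : L // x ∉ LieAlgebra.center F L} | (v : L) ∈ S},
      (commutingGraph F L).edist v s ≤ k := by
  induction k generalizing v with
  | zero => exact ⟨v, hv, by simp⟩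
  | succ k ih =>
    rw [Function.iterate_succ_apply'] at hv
    obtain ⟨-, t, ht, hvt⟩ := hv
    let t' : {x : L // x ∉ LieAlgebra.center F L} := ⟨t, iterate_nbhd_subset_noncentral hS k ht⟩
    obtain ⟨s, hs, hts⟩ := ih t' ht
    have hvt' : (commutingGraph F L).edist v t' ≤ 1 := by
      rw [SimpleGraph.edist_le_one_iff_adj_or_eq]
      by_cases h : v = t'
      · exact .inr h
      · exact .inl ⟨h, hvt⟩
    refine ⟨s, hs, ?_⟩
    calc (commutingGraph F L).edist v s
        ≤ (commutingGraph F L).edist v t' + (commutingGraph F L).edist t' s :=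
          SimpleGraph.edist_triangle
      _ ≤ 1 + k := add_le_add hvt' hts
      _ = (k + 1 : ℕ) := by push_cast; ring

lemma mem_of_reachable_of_nbhd_subset {T : Set L} (hT : nbhd F L T ⊆ T)
    {a b : {x : L // x ∉ LieAlgebra.center F L}} (hab : (commutingGraph F L).Reachable a b)
    (ha : (a : L) ∈ T) : (b : L) ∈ T := by
  obtain ⟨w⟩ := hab
  induction w with
  | nil => exact ha
  | @cons u v _ hadj _ ih => exact ih (hT ⟨v.2, u, ha, hadj.symm.2⟩)

end CommutingGraph

theorem stmt8_general (F : Type*) [Field F] (L : Type*) [LieRing L] [LieAlgebra F L]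
    (S : Set L) (hSV : S ⊆ {x : L | x ∉ LieAlgebra.center F L})
    (hconn : ((commutingGraph F L).induce {v : {x : L // x ∉ LieAlgebra.center F L} |
      (v : L) ∈ S}).Connected)
    (d : ℕ)
    (hterm : (nbhd F L)^[d] S = (nbhd F L)^[d + 1] S) :
    ((commutingGraph F L).Connected ↔
        (nbhd F L)^[d] S = {x : L | x ∉ LieAlgebra.center F L}) ∧
      ((nbhd F L)^[d] S = {x : L | x ∉ LieAlgebra.center F L} →
        (commutingGraph F L).ediam ≤ 2 * (d : ℕ∞) +
          ((commutingGraph F L).induce {v : {x : L // x ∉ LieAlgebra.center F L} |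
            (v : L) ∈ S}).ediam) := by
  have hclosed : nbhd F L ((nbhd F L)^[d] S) ⊆ (nbhd F L)^[d] S := by
    rw [← Function.iterate_succ_apply' (nbhd F L) d, ← hterm]
  have near_S (hV : (nbhd F L)^[d] S = {x : L | x ∉ LieAlgebra.center F L})
      (v : {x : L // x ∉ LieAlgebra.center F L}) :=
    exists_edist_le_of_mem_iterate_nbhd hSV d v (hV ▸ v.2)
  refine ⟨⟨fun hG => ?_, fun hV => ?_⟩, fun hV => ?_⟩
  · obtain ⟨⟨s, hs⟩⟩ := hconn.nonempty
    refine (iterate_nbhd_subset_noncentral hSV d).antisymm fun x hx => ?_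
    exact mem_of_reachable_of_nbhd_subset hclosed (hG.preconnected s ⟨x, hx⟩)
      (subset_iterate_nbhd hSV d hs)
  · refine SimpleGraph.connected_of_induce_connected hconn fun v => ?_
    obtain ⟨s, hs, hvs⟩ := near_S hV v
    exact ⟨s, hs, SimpleGraph.reachable_of_edist_ne_top (ne_top_of_le_ne_top (by simp) hvs)⟩
  · exact SimpleGraph.ediam_le_two_mul_add_ediam_induce (near_S hV)

/-- let `S` be a nonempty set of vertices of the commuting graph of `L` inducing
a connected subgraph, and suppose the series of closed neighborhoods of `S` terminates at
`d ≥ 1`. Then `Γ(L)` is connected iff `N^d(S)` is the whole vertex set, in which case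
`diam Γ(L) ≤ 2d + diam Γ(S)`. -/
theorem stmt8 (F : Type*) [Field F] (L : Type*) [LieRing L] [LieAlgebra F L]
    (hnc : ∃ x y : L, ⁅x, y⁆ ≠ 0)
    (S : Set L) (hS : S.Nonempty) (hSV : S ⊆ {x : L | x ∉ LieAlgebra.center F L})
    (hconn : ((commutingGraph F L).induce {v : {x : L // x ∉ LieAlgebra.center F L} |
      (v : L) ∈ S}).Connected)
    (d : ℕ) (hd : 1 ≤ d)
    (hlt : (nbhd F L)^[d - 1] S ⊂ (nbhd F L)^[d] S)
    (hterm : (nbhd F L)^[d] S = (nbhd F L)^[d + 1] S) :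
    ((commutingGraph F L).Connected ↔
        (nbhd F L)^[d] S = {x : L | x ∉ LieAlgebra.center F L}) ∧
      ((nbhd F L)^[d] S = {x : L | x ∉ LieAlgebra.center F L} →
        (commutingGraph F L).ediam ≤ 2 * (d : ℕ∞) +
          ((commutingGraph F L).induce {v : {x : L // x ∉ LieAlgebra.center F L} |
            (v : L) ∈ S}).ediam) :=
  stmt8_general F L S hSV hconn d hterm
end

section
/- Let L be a noncommutative finite-dimensional Lie algebra over a field F with derived subalgebra L¹ = ⁅L, L⁆ and center Z(L). If dim L¹ < dim Z(L), then L is decomposable: there exist Lie ideals I, J of L with I ≠ 0, J ≠ 0, I ∩ J = 0 and I + J = L. -/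
/-!
Since `dim L¹ < dim Z(L)`, some central element `z` lies outside `L¹`. A linear functional `f`
with `f z ≠ 0` vanishing on `L¹` splits `L = F z ⊕ ker f`. The line `F z` is an ideal because
`z` is central, and `ker f` is an ideal because it contains `L¹`; it is nonzero because `L` is
not abelian.
-/

namespace LieAlgebra

variable {R L : Type*} [CommRing R] [LieRing L] [LieAlgebra R L]

theorem lie_mem_derivedSeries_one (x y : L) : ⁅x, y⁆ ∈ derivedSeries R L 1 :=
  LieSubmodule.lie_mem_lie (LieSubmodule.mem_top x) (LieSubmodule.mem_top y)

theorem derivedSeries_one_ne_bot {x y : L} (h : ⁅x, y⁆ ≠ 0) : derivedSeries R L 1 ≠ ⊥ :=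
  fun hbot ↦ h <| by
    simpa only [hbot, LieSubmodule.mem_bot] using lie_mem_derivedSeries_one (R := R) x y

end LieAlgebra

namespace LieIdeal

open LieAlgebra

variable {R L : Type*} [CommRing R] [LieRing L] [LieAlgebra R L]

def ofLeCenter (N : Submodule R L) (hN : N ≤ (center R L).toSubmodule) : LieIdeal R L where
  toSubmodule := N
  lie_mem {x m} hm := by
    rw [(LieModule.mem_maxTrivSubmodule R L L m).1 (hN hm) x]
    exact N.zero_mem

def ofDerivedSeriesOneLe (N : Submodule R L) (hN : (derivedSeries R L 1).toSubmodule ≤ N) :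
    LieIdeal R L where
  toSubmodule := N
  lie_mem {x m} _ := hN (lie_mem_derivedSeries_one x m)

end LieIdeal

namespace LieAlgebra

theorem exists_isCompl_of_mem_center_of_notMem_derivedSeries {K L : Type*} [Field K]
    [LieRing L] [LieAlgebra K L] {z : L} (hz : z ∈ center K L)
    (hzD : z ∉ derivedSeries K L 1) :
    ∃ I J : LieIdeal K L, z ∈ I ∧ derivedSeries K L 1 ≤ J ∧ IsCompl I J := by
  obtain ⟨f, hfz, hDf⟩ := Submodule.exists_le_ker_of_notMem hzD
  have hf : Function.Surjective f :=
    LinearMap.surjective_iff_ne_zero.2 fun h ↦ hfz (by simp [h])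
  have hcompl : IsCompl (K ∙ z) (LinearMap.ker f) :=
    (Submodule.isCompl_span_singleton_of_isCoatom_of_notMem
      (LinearMap.isCoatom_ker_of_surjective hf) hfz).symm
  refine ⟨LieIdeal.ofLeCenter (K ∙ z) ((Submodule.span_singleton_le_iff_mem _ _).2 hz),
    LieIdeal.ofDerivedSeriesOneLe (LinearMap.ker f) hDf, ?_, hDf, ?_⟩
  · exact Submodule.mem_span_singleton_self z
  · exact LieSubmodule.isCompl_toSubmodule.1 hcompl

end LieAlgebra

/-- a noncommutative finite-dimensional Lie algebra whose derived subalgebra has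
dimension strictly smaller than that of its center is decomposable. -/
theorem stmt10 (F : Type*) [Field F] (L : Type*) [LieRing L] [LieAlgebra F L]
    [Module.Finite F L]
    (hnc : ∃ x y : L, ⁅x, y⁆ ≠ 0)
    (hdim : Module.finrank F (LieAlgebra.derivedSeries F L 1).toSubmodule <
      Module.finrank F (LieAlgebra.center F L).toSubmodule) :
    ∃ I J : LieIdeal F L, I ≠ ⊥ ∧ J ≠ ⊥ ∧ I ⊓ J = ⊥ ∧ I ⊔ J = ⊤ := by
  obtain ⟨x, y, hxy⟩ := hnc
  obtain ⟨z, hz, hzD⟩ : ∃ z ∈ LieAlgebra.center F L, z ∉ LieAlgebra.derivedSeries F L 1 :=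
    SetLike.not_le_iff_exists.1 fun hle ↦ hdim.not_ge (Submodule.finrank_mono hle)
  obtain ⟨I, J, hzI, hDJ, hIJ⟩ :=
    LieAlgebra.exists_isCompl_of_mem_center_of_notMem_derivedSeries hz hzD
  refine ⟨I, J, ?_, ?_, hIJ.inf_eq_bot, hIJ.sup_eq_top⟩
  · rintro rfl
    rw [LieSubmodule.mem_bot] at hzI
    exact hzD (hzI ▸ zero_mem _)
  · exact ne_bot_of_le_ne_bot (LieAlgebra.derivedSeries_one_ne_bot hxy) hDJ
end

section
/- Let L be a finite-dimensional Lie algebra over a field F with derived subalgebra L¹ = ⁅L, L⁆ and center Z(L). If dim Z(L) < dim L − 2·dim L¹, then the commuting graph Γ(L) is connected and diam(Γ(L)) = 2. -/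
namespace SimpleGraph

variable {V : Type*} {G : SimpleGraph V}

theorem ediam_eq_two_of_ne_top_of_commonNeighbors_nonempty (hG : G ≠ ⊤)
    (h : ∀ u v, u ≠ v → ¬ G.Adj u v → (G.commonNeighbors u v).Nonempty) : G.ediam = 2 := by
  refine le_antisymm (ediam_le_of_edist_le fun u v => not_lt.mp fun huv => ?_) ?_
  · obtain ⟨hne, hnadj, hempty⟩ := two_lt_edist_iff.mp huv
    exact (h u v hne hnadj).ne_empty hempty
  · obtain ⟨u, v, hne, hnadj⟩ : ∃ u v, u ≠ v ∧ ¬ G.Adj u v := by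
      by_contra! hall
      exact hG (eq_top_iff.mpr fun u v huv => hall u v huv)
    exact (edist_eq_two_iff.mpr ⟨hne, hnadj, h u v hne hnadj⟩).ge.trans edist_le_ediam

end SimpleGraph

namespace LieAlgebra

section CommRing

variable {R L : Type*} [CommRing R] [LieRing L] [LieAlgebra R L]

theorem range_ad_le_derivedSeries_one (x : L) :
    LinearMap.range (ad R L x) ≤ (derivedSeries R L 1).toSubmodule := by
  rintro _ ⟨y, rfl⟩
  exact lie_mem_derivedSeries_one x y

theorem exists_lie_ne_zero_of_notMem_center {x : L} (hx : x ∉ center R L) :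
    ∃ y, y ∉ center R L ∧ ⁅x, y⁆ ≠ 0 := by
  obtain ⟨y, hy⟩ : ∃ y, ⁅y, x⁆ ≠ 0 := by
    simpa [LieModule.mem_maxTrivSubmodule] using hx
  refine ⟨y, fun hyc => hy ?_, fun hxy => hy ?_⟩
  · rw [← lie_skew, (LieModule.mem_maxTrivSubmodule R L L y).mp hyc x, neg_zero]
  · rw [← lie_skew, hxy, neg_zero]

end CommRing

section Field

variable (F : Type*) {L : Type*} [Field F] [LieRing L] [LieAlgebra F L] [Module.Finite F L]

theorem finrank_le_finrank_ker_ad_add (x : L) :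
    Module.finrank F L ≤ Module.finrank F (LinearMap.ker (ad F L x)) +
      Module.finrank F (derivedSeries F L 1).toSubmodule := by
  have hrank := LinearMap.finrank_range_add_finrank_ker (ad F L x)
  have hrange := Submodule.finrank_mono (range_ad_le_derivedSeries_one (R := F) x)
  omega

theorem finrank_sub_two_mul_le_finrank_inf_ker_ad (x y : L) :
    Module.finrank F L - 2 * Module.finrank F (derivedSeries F L 1).toSubmodule ≤
      Module.finrank F ↥(LinearMap.ker (ad F L x) ⊓ LinearMap.ker (ad F L y)) := by
  have hx := finrank_le_finrank_ker_ad_add F x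
  have hy := finrank_le_finrank_ker_ad_add F y
  have hsup := Submodule.finrank_sup_add_finrank_inf_eq
    (LinearMap.ker (ad F L x)) (LinearMap.ker (ad F L y))
  have hle := Submodule.finrank_le (LinearMap.ker (ad F L x) ⊔ LinearMap.ker (ad F L y))
  omega

theorem exists_notMem_center_lie_eq_zero_s11
    (hdim : Module.finrank F (center F L).toSubmodule <
      Module.finrank F L - 2 * Module.finrank F (derivedSeries F L 1).toSubmodule)
    (x y : L) : ∃ w, w ∉ center F L ∧ ⁅x, w⁆ = 0 ∧ ⁅y, w⁆ = 0 := by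
  have hlt := hdim.trans_le (finrank_sub_two_mul_le_finrank_inf_ker_ad F x y)
  obtain ⟨w, ⟨hwx, hwy⟩, hw⟩ := Set.not_subset.mp fun hsub =>
    hlt.not_ge (Submodule.finrank_mono hsub)
  exact ⟨w, hw, hwx, hwy⟩

end Field

end LieAlgebra

section CommutingGraph

variable {R L : Type*} [CommRing R] [LieRing L] [LieAlgebra R L]

theorem commutingGraph_ne_top (h : LieAlgebra.center R L ≠ ⊤) : commutingGraph R L ≠ ⊤ := by
  obtain ⟨x, hx⟩ := SetLike.exists_not_mem_of_ne_top _ h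
  obtain ⟨y, hy, hxy⟩ := LieAlgebra.exists_lie_ne_zero_of_notMem_center hx
  intro htop
  have hne : (⟨x, hx⟩ : {x : L // x ∉ LieAlgebra.center R L}) ≠ ⟨y, hy⟩ := by
    rintro ⟨⟩
    exact hxy (lie_self x)
  have hadj : (commutingGraph R L).Adj ⟨x, hx⟩ ⟨y, hy⟩ := by
    rw [htop]
    exact hne
  exact hxy hadj.2

theorem mem_commonNeighbors_commutingGraph {u v w : {x : L // x ∉ LieAlgebra.center R L}}
    (huv : ⁅(u : L), (v : L)⁆ ≠ 0) (hu : ⁅(u : L), (w : L)⁆ = 0)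
    (hv : ⁅(v : L), (w : L)⁆ = 0) :
    w ∈ (commutingGraph R L).commonNeighbors u v := by
  refine ⟨⟨?_, hu⟩, ⟨?_, hv⟩⟩
  · rintro rfl
    exact huv (by rw [← lie_skew, hv, neg_zero])
  · rintro rfl
    exact huv hu

end CommutingGraph

/-- if `dim Z(L) < dim L - 2 ⬝ dim L¹`, then the commuting graph of `L` is
connected with diameter exactly 2. -/
theorem stmt11 (F : Type*) [Field F] (L : Type*) [LieRing L] [LieAlgebra F L]
    [Module.Finite F L]
    (hdim : Module.finrank F (LieAlgebra.center F L).toSubmodule <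
      Module.finrank F L - 2 * Module.finrank F (LieAlgebra.derivedSeries F L 1).toSubmodule) :
    (commutingGraph F L).Connected ∧ (commutingGraph F L).ediam = 2 := by
  have hcenter : LieAlgebra.center F L ≠ ⊤ := by
    rintro htop
    rw [htop, LieSubmodule.top_toSubmodule, finrank_top] at hdim
    omega
  have hediam : (commutingGraph F L).ediam = 2 := by
    refine SimpleGraph.ediam_eq_two_of_ne_top_of_commonNeighbors_nonempty
      (commutingGraph_ne_top hcenter) fun u v hne hnadj => ?_
    obtain ⟨w, hw, hu, hv⟩ := LieAlgebra.exists_notMem_center_lie_eq_zero_s11 F hdim u v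
    exact ⟨⟨w, hw⟩, mem_commonNeighbors_commutingGraph (fun h => hnadj ⟨hne, h⟩) hu hv⟩
  have : Nontrivial {x : L // x ∉ LieAlgebra.center F L} :=
    (commutingGraph F L).nontrivial_of_ediam_ne_zero (by simp [hediam])
  exact ⟨(commutingGraph F L).connected_of_ediam_ne_top (by simp [hediam]), hediam⟩
end

section
/- Let L be a noncommutative finite-dimensional Lie algebra over a field F whose derived subalgebra L¹ = ⁅L, L⁆ has dimension 2. Then dim Z(L) ≤ dim L − 3. -/
/-- a noncommutative finite-dimensional Lie algebra with two-dimensional derived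
subalgebra satisfies `dim Z(L) ≤ dim L - 3`. -/
theorem stmt12 (F : Type*) [Field F] (L : Type*) [LieRing L] [LieAlgebra F L]
    [Module.Finite F L]
    (hnc : ∃ x y : L, ⁅x, y⁆ ≠ 0)
    (hder : Module.finrank F (LieAlgebra.derivedSeries F L 1).toSubmodule = 2) :
    Module.finrank F (LieAlgebra.center F L).toSubmodule + 3 ≤ Module.finrank F L := by
  by_contra h
  push_neg at h
  set Z := (LieAlgebra.center F L).toSubmodule with hZ
  obtain ⟨W, hW⟩ := Submodule.exists_isCompl Z
  have hsum : Module.finrank F Z + Module.finrank F W = Module.finrank F L :=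
    Submodule.finrank_add_eq_of_isCompl hW
  have hWle : Module.finrank F W ≤ 2 := by omega
  -- get two elements spanning W
  obtain ⟨w0, w1, hWspan⟩ : ∃ w0 w1 : L, W ≤ Submodule.span F {w0, w1} := by
    let b := Module.finBasis F W
    refine ⟨if h : 0 < Module.finrank F W then (b ⟨0, h⟩ : L) else 0,
      if h : 1 < Module.finrank F W then (b ⟨1, h⟩ : L) else 0, ?_⟩
    have hWeq : W = Submodule.span F (Set.range fun i => (b i : L)) := by
      conv_lhs => rw [← Submodule.map_subtype_top W]
      rw [← b.span_eq, Submodule.map_span]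
      congr 1
      ext x
      simp
    refine le_trans (le_of_eq hWeq) ?_
    rw [Submodule.span_le]
    rintro _ ⟨⟨iv, hiv⟩, rfl⟩
    apply Submodule.subset_span
    have : iv = 0 ∨ iv = 1 := by omega
    rcases this with rfl | rfl
    · left
      rw [dif_pos hiv]
    · right
      rw [Set.mem_singleton_iff, dif_pos hiv]
  -- every bracket lies in span {⁅w0, w1⁆}
  have key : ∀ x y : L, ⁅x, y⁆ ∈ Submodule.span F ({⁅w0, w1⁆} : Set L) := by
    intro x y
    obtain ⟨z, hz, u, hu, hx⟩ := Submodule.mem_sup.mp (hW.sup_eq_top ▸ Submodule.mem_top : x ∈ Z ⊔ W)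
    obtain ⟨z', hz', v, hv, hy⟩ := Submodule.mem_sup.mp (hW.sup_eq_top ▸ Submodule.mem_top : y ∈ Z ⊔ W)
    obtain ⟨a, b, hab⟩ := Submodule.mem_span_pair.mp (hWspan hu)
    obtain ⟨c, d, hcd⟩ := Submodule.mem_span_pair.mp (hWspan hv)
    have hzc : ∀ t : L, ⁅t, z⁆ = 0 := fun t => hz t
    have hzc' : ∀ t : L, ⁅t, z'⁆ = 0 := fun t => hz' t
    have hzl : ∀ t : L, ⁅z, t⁆ = 0 := fun t => by
      rw [← lie_skew, hzc t, neg_zero]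
    have : ⁅x, y⁆ = (a * d - b * c) • ⁅w0, w1⁆ := by
      rw [← hx, ← hy, ← hab, ← hcd]
      simp only [lie_add, add_lie, lie_smul, smul_lie, hzc', hzl, lie_self, smul_zero, zero_add,
        add_zero]
      rw [← lie_skew w1 w0]
      match_scalars <;> ring
    rw [this]
    exact Submodule.smul_mem _ _ (Submodule.mem_span_singleton_self _)
  -- hence the derived subalgebra has dimension ≤ 1
  have hle : (LieAlgebra.derivedSeries F L 1).toSubmodule ≤
      Submodule.span F ({⁅w0, w1⁆} : Set L) := by
    rw [LieAlgebra.derivedSeries_def, LieAlgebra.derivedSeriesOfIdeal_succ,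
      LieAlgebra.derivedSeriesOfIdeal_zero, LieSubmodule.lieIdeal_oper_eq_linear_span]
    rw [Submodule.span_le]
    rintro _ ⟨⟨u', hu'⟩, ⟨v', hv'⟩, rfl⟩
    exact key _ _
  have h1 : Module.finrank F (LieAlgebra.derivedSeries F L 1).toSubmodule ≤ 1 := by
    refine le_trans (Submodule.finrank_mono hle) ?_
    by_cases hzero : (⁅w0, w1⁆ : L) = 0
    · rw [hzero, Submodule.span_zero_singleton]
      simp
    · rw [finrank_span_singleton hzero]
  omega
end

section
/- Let L be a finite-dimensional Lie algebra over a field F with dim L ≥ 3, whose derived subalgebra L¹ = ⁅L, L⁆ has dimension 2 and whose center satisfies dim Z(L) = dim L − 3. Then the commuting graph Γ(L) is disconnected. -/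
/-!
If `dim L / Z(L) = 3`, some non-central `v` has centralizer exactly `F v + Z(L)`: either an
arbitrary non-central `x` already does, or `x` commutes with some `y ∉ F x + Z(L)`, and then any
`v` outside the abelian subspace `P = Z(L) + F x + F y` works, because `L = P + F v` and the
`P`-component of an element commuting with `v` commutes with all of `L`. Every vertex adjacent
to a vertex of `(F v + Z(L)) \ Z(L)` lies in it again, so this proper subset of the vertices is
a union of connected components.
-/

open Module Submodule LieAlgebra

namespace SimpleGraph

variable {V : Type*} {G : SimpleGraph V}

lemma Reachable.mem_of_adj_closed {S : Set V} (hS : ∀ ⦃s t⦄, G.Adj s t → s ∈ S → t ∈ S)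
    {u v : V} (h : G.Reachable u v) (hu : u ∈ S) : v ∈ S := by
  obtain ⟨p⟩ := h
  induction p with
  | nil => exact hu
  | cons hadj _ ih => exact ih (hS hadj hu)

lemma not_connected_of_adj_closed {S : Set V} (hS : ∀ ⦃s t⦄, G.Adj s t → s ∈ S → t ∈ S)
    {u v : V} (hu : u ∈ S) (hv : v ∉ S) : ¬ G.Connected :=
  fun h => hv ((h u v).mem_of_adj_closed hS hu)

end SimpleGraph

namespace LieAlgebra

variable {F L : Type*} [Field F] [LieRing L] [LieAlgebra F L]

lemma mem_ker_ad_comm {x y : L} :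
    y ∈ LinearMap.ker (ad F L x) ↔ x ∈ LinearMap.ker (ad F L y) := by
  simp only [LinearMap.mem_ker, ad_apply]
  rw [← lie_skew, neg_eq_zero]

lemma center_le_ker_ad (x : L) : (center F L).toSubmodule ≤ LinearMap.ker (ad F L x) :=
  fun z hz => (LieModule.mem_maxTrivSubmodule F L L z).mp hz x

lemma mem_center_of_ker_ad_eq_top {x : L} (h : LinearMap.ker (ad F L x) = ⊤) :
    x ∈ center F L :=
  (LieModule.mem_maxTrivSubmodule F L L x).mpr fun y =>
    (mem_ker_ad_comm.mp (h ▸ mem_top : y ∈ LinearMap.ker (ad F L x)) : ad F L y x = 0)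

lemma ker_ad_le_ker_ad_of_mem_sup {v s : L} (hs : s ∈ (center F L).toSubmodule ⊔ F ∙ v)
    (hsZ : s ∉ center F L) : LinearMap.ker (ad F L s) ≤ LinearMap.ker (ad F L v) := by
  obtain ⟨z, hz, w, hw, rfl⟩ := mem_sup.mp hs
  obtain ⟨c, rfl⟩ := mem_span_singleton.mp hw
  have hc : c ≠ 0 := by
    rintro rfl
    exact hsZ (by simpa using hz)
  intro t ht
  have hzt : ⁅z, t⁆ = 0 := by simpa using mem_ker_ad_comm.mp (center_le_ker_ad t hz)
  simp only [LinearMap.mem_ker, ad_apply, add_lie, smul_lie, hzt, zero_add] at ht ⊢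
  exact (smul_eq_zero.mp ht).resolve_left hc

lemma le_ker_ad_of_mem_center_sup_span_pair {x y : L} (hxy : ⁅x, y⁆ = 0) {p : L}
    (hp : p ∈ (center F L).toSubmodule ⊔ F ∙ x ⊔ F ∙ y) :
    (center F L).toSubmodule ⊔ F ∙ x ⊔ F ∙ y ≤ LinearMap.ker (ad F L p) := by
  have hle : ∀ u, x ∈ LinearMap.ker (ad F L u) → y ∈ LinearMap.ker (ad F L u) →
      (center F L).toSubmodule ⊔ F ∙ x ⊔ F ∙ y ≤ LinearMap.ker (ad F L u) := fun u hx hy =>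
    sup_le (sup_le (center_le_ker_ad u) ((span_singleton_le_iff_mem _ _).mpr hx))
      ((span_singleton_le_iff_mem _ _).mpr hy)
  have hyx : ⁅y, x⁆ = 0 := by rw [← lie_skew, hxy, neg_zero]
  have hpx := hle x (by simp) (by simpa using hxy) hp
  have hpy := hle y (by simpa using hyx) (by simp) hp
  exact hle p (mem_ker_ad_comm.mp hpx) (mem_ker_ad_comm.mp hpy)

lemma ker_ad_le_of_sup_eq_top {P : Submodule F L} (hP : ∀ p ∈ P, P ≤ LinearMap.ker (ad F L p))
    {v : L} (hv : P ⊔ F ∙ v = ⊤) :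
    LinearMap.ker (ad F L v) ≤ (center F L).toSubmodule ⊔ F ∙ v := by
  intro w hw
  obtain ⟨p, hp, u, hu, rfl⟩ := mem_sup.mp (hv ▸ mem_top : w ∈ P ⊔ F ∙ v)
  obtain ⟨c, rfl⟩ := mem_span_singleton.mp hu
  have hpv : v ∈ LinearMap.ker (ad F L p) := by
    rw [mem_ker_ad_comm]
    simpa [lie_add, lie_smul] using hw
  have hpZ : p ∈ center F L := mem_center_of_ker_ad_eq_top <| top_le_iff.mp <|
    hv ▸ sup_le (hP p hp) ((span_singleton_le_iff_mem _ _).mpr hpv)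
  exact add_mem (mem_sup_left hpZ) (mem_sup_right (smul_mem _ _ (mem_span_singleton_self v)))

lemma exists_ker_ad_le_center_sup_span [Module.Finite F L]
    (h : finrank F L = finrank F (center F L).toSubmodule + 3) :
    ∃ v ∉ center F L, LinearMap.ker (ad F L v) ≤ (center F L).toSubmodule ⊔ F ∙ v := by
  set Z := (center F L).toSubmodule
  obtain ⟨x, -, hx⟩ : ∃ x ∈ (⊤ : Submodule F L), x ∉ Z :=
    SetLike.exists_of_lt <| lt_top_iff_ne_top.mpr fun hZ => by
      rw [hZ, finrank_top] at h
      omega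
  by_cases hcx : LinearMap.ker (ad F L x) ≤ Z ⊔ F ∙ x
  · exact ⟨x, hx, hcx⟩
  obtain ⟨y, hxy, hy⟩ := SetLike.not_le_iff_exists.mp hcx
  have hP : finrank F (Z ⊔ F ∙ x ⊔ F ∙ y : Submodule F L) = finrank F Z + 2 := by
    rw [finrank_sup_span_singleton hy, finrank_sup_span_singleton hx]
  obtain ⟨v, -, hv⟩ : ∃ v ∈ (⊤ : Submodule F L), v ∉ Z ⊔ F ∙ x ⊔ F ∙ y :=
    SetLike.exists_of_lt <| lt_top_iff_ne_top.mpr fun hPtop => by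
      rw [hPtop, finrank_top] at hP
      omega
  have hPv : Z ⊔ F ∙ x ⊔ F ∙ y ⊔ F ∙ v = ⊤ :=
    eq_top_of_finrank_eq (by rw [finrank_sup_span_singleton hv, hP, h])
  refine ⟨v, fun hvZ => hv (mem_sup_left (mem_sup_left hvZ)), ?_⟩
  exact ker_ad_le_of_sup_eq_top (fun p hp => le_ker_ad_of_mem_center_sup_span_pair (by simpa using hxy) hp) hPv

lemma not_connected_commutingGraph_of_ker_ad_le {v : L} (hv : v ∉ center F L)
    (hC : LinearMap.ker (ad F L v) ≤ (center F L).toSubmodule ⊔ F ∙ v)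
    (hne : (center F L).toSubmodule ⊔ F ∙ v ≠ ⊤) : ¬ (commutingGraph F L).Connected := by
  obtain ⟨t, -, ht⟩ := SetLike.exists_of_lt hne.lt_top
  exact SimpleGraph.not_connected_of_adj_closed
    (S := {s | (s : L) ∈ (center F L).toSubmodule ⊔ F ∙ v})
    (fun s _ hst hs => hC (ker_ad_le_ker_ad_of_mem_sup hs s.2 hst.2))
    (u := ⟨v, hv⟩) (mem_sup_right (mem_span_singleton_self v))
    (v := ⟨t, fun htZ => ht (mem_sup_left htZ)⟩) ht

lemma not_connected_commutingGraph_of_finrank_eq_finrank_center_add_three [Module.Finite F L]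
    (h : finrank F L = finrank F (center F L).toSubmodule + 3) :
    ¬ (commutingGraph F L).Connected := by
  obtain ⟨v, hv, hC⟩ := exists_ker_ad_le_center_sup_span h
  refine not_connected_commutingGraph_of_ker_ad_le hv hC fun htop => ?_
  have hrank := finrank_sup_span_singleton (K := F) hv
  rw [htop, finrank_top] at hrank
  omega

end LieAlgebra

theorem stmt13_general (F : Type*) [Field F] (L : Type*) [LieRing L] [LieAlgebra F L]
    [Module.Finite F L]
    (hdimL : 3 ≤ Module.finrank F L)
    (hcen : Module.finrank F (LieAlgebra.center F L).toSubmodule = Module.finrank F L - 3) :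
    ¬ (commutingGraph F L).Connected :=
  not_connected_commutingGraph_of_finrank_eq_finrank_center_add_three (by omega)

/-- a finite-dimensional Lie algebra of dimension at least 3 with
two-dimensional derived subalgebra and center of codimension exactly 3 has a disconnected
commuting graph. -/
theorem stmt13 (F : Type*) [Field F] (L : Type*) [LieRing L] [LieAlgebra F L]
    [Module.Finite F L]
    (hdimL : 3 ≤ Module.finrank F L)
    (hder : Module.finrank F (LieAlgebra.derivedSeries F L 1).toSubmodule = 2)
    (hcen : Module.finrank F (LieAlgebra.center F L).toSubmodule = Module.finrank F L - 3) :
    ¬ (commutingGraph F L).Connected :=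
  stmt13_general F L hdimL hcen
end

section
/- Let m ≥ 2 be an integer and let h be the (2m+1)-dimensional Heisenberg Lie algebra over a field F, i.e. a Lie algebra with basis e₁, …, e_{2m+1} whose only nonzero brackets among basis vectors are ⁅e_i, e_{i+m}⁆ = e_{2m+1} = −⁅e_{i+m}, e_i⁆ for 1 ≤ i ≤ m (all other brackets of basis vectors vanish). Then the commuting graph Γ(h) is connected and diam(Γ(h)) = 2. -/
/-! Every bracket in the Heisenberg algebra is a multiple of the central basis vector `z`, so
`ad x` has rank at most one and the common centralizer of any `x, y` has codimension at most 2,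
i.e. dimension at least `2m - 1 ≥ 3`. The center is the line `F z`, so this common centralizer
contains a noncentral element, which is a common neighbour of `x` and `y`. Hence all distances
are at most 2, and the noncommuting pair `e₀, e_m` realizes 2. -/

open Module LieAlgebra

namespace SimpleGraph

variable {V : Type*} {G : SimpleGraph V}

lemma edist_le_two_of_commonNeighbors_nonempty
    (h : ∀ u v, u ≠ v → ¬ G.Adj u v → (G.commonNeighbors u v).Nonempty) (u v : V) :
    G.edist u v ≤ 2 := by
  by_cases huv : u = v
  · simp [huv]
  by_cases hadj : G.Adj u v
  · rw [edist_eq_one_iff_adj.mpr hadj]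
    norm_num
  · rw [edist_eq_two_iff.mpr ⟨huv, hadj, h u v huv hadj⟩]

theorem connected_and_ediam_eq_two_of_commonNeighbors_nonempty
    (hne : ∃ u v, u ≠ v ∧ ¬ G.Adj u v)
    (h : ∀ u v, u ≠ v → ¬ G.Adj u v → (G.commonNeighbors u v).Nonempty) :
    G.Connected ∧ G.ediam = 2 := by
  obtain ⟨u, v, huv, hadj⟩ := hne
  have hle : G.ediam ≤ 2 := ediam_le_of_edist_le (edist_le_two_of_commonNeighbors_nonempty h)
  have : Nonempty V := ⟨u⟩
  refine ⟨connected_of_ediam_ne_top (ne_top_of_le_ne_top (by simp) hle), le_antisymm hle ?_⟩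
  rw [← edist_eq_two_iff.mpr ⟨huv, hadj, h u v huv hadj⟩]
  exact edist_le_ediam

end SimpleGraph

section CommutingGraph

variable {F L : Type*} [CommRing F] [LieRing L] [LieAlgebra F L]

lemma lie_eq_zero_comm {x y : L} (h : ⁅x, y⁆ = 0) : ⁅y, x⁆ = 0 := by
  rw [← lie_skew, h, neg_zero]

lemma notMem_center_of_lie_ne_zero {x y : L} (h : ⁅x, y⁆ ≠ 0) :
    x ∉ center F L ∧ y ∉ center F L := by
  simp only [LieModule.mem_maxTrivSubmodule]
  exact ⟨fun hx => h (lie_eq_zero_comm (hx y)), fun hy => h (hy x)⟩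

theorem commutingGraph_connected_and_ediam_eq_two (hnc : ∃ x y : L, ⁅x, y⁆ ≠ 0)
    (hcomm : ∀ x y : L, ∃ w ∉ center F L, ⁅x, w⁆ = 0 ∧ ⁅y, w⁆ = 0) :
    (commutingGraph F L).Connected ∧ (commutingGraph F L).ediam = 2 := by
  refine SimpleGraph.connected_and_ediam_eq_two_of_commonNeighbors_nonempty ?_ ?_
  · obtain ⟨x, y, hxy⟩ := hnc
    obtain ⟨hx, hy⟩ := notMem_center_of_lie_ne_zero (F := F) hxy
    refine ⟨⟨x, hx⟩, ⟨y, hy⟩, fun h => hxy ?_, fun h => hxy h.2⟩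
    rw [show y = x from congrArg Subtype.val h.symm, lie_self]
  · rintro u v huv hadj
    have huv' : ⁅(u : L), (v : L)⁆ ≠ 0 := fun h => hadj ⟨huv, h⟩
    obtain ⟨w, hw, huw, hvw⟩ := hcomm u v
    refine ⟨⟨w, hw⟩, ⟨fun h => huv' ?_, huw⟩, ⟨fun h => huv' ?_, hvw⟩⟩
    · rw [congrArg Subtype.val h]
      exact lie_eq_zero_comm hvw
    · rw [congrArg Subtype.val h, huw]

end CommutingGraph

section Centralizer

variable {F L : Type*} [Field F] [LieRing L] [LieAlgebra F L] [FiniteDimensional F L]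
  {D : Submodule F L}

lemma finrank_le_finrank_ker_ad_add (hD : ∀ x y : L, ⁅x, y⁆ ∈ D) (x : L) :
    finrank F L ≤ finrank F (LinearMap.ker (ad F L x)) + finrank F D := by
  have hrange : LinearMap.range (ad F L x) ≤ D := by
    rintro _ ⟨y, rfl⟩
    exact hD x y
  have := Submodule.finrank_mono hrange
  have := LinearMap.finrank_range_add_finrank_ker (ad F L x)
  omega

lemma finrank_le_finrank_inf_ker_ad_add (hD : ∀ x y : L, ⁅x, y⁆ ∈ D) (x y : L) :
    finrank F L ≤
      finrank F ↥(LinearMap.ker (ad F L x) ⊓ LinearMap.ker (ad F L y)) + 2 * finrank F D := by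
  have := Submodule.finrank_sup_add_finrank_inf_eq (LinearMap.ker (ad F L x))
    (LinearMap.ker (ad F L y))
  have := Submodule.finrank_le (LinearMap.ker (ad F L x) ⊔ LinearMap.ker (ad F L y))
  have := finrank_le_finrank_ker_ad_add hD x
  have := finrank_le_finrank_ker_ad_add hD y
  omega

lemma exists_notMem_center_lie_eq_zero (hD : ∀ x y : L, ⁅x, y⁆ ∈ D)
    (hdim : finrank F (center F L) + 2 * finrank F D < finrank F L) (x y : L) :
    ∃ w ∉ center F L, ⁅x, w⁆ = 0 ∧ ⁅y, w⁆ = 0 := by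
  by_contra! h
  have hle : LinearMap.ker (ad F L x) ⊓ LinearMap.ker (ad F L y) ≤ (center F L).toSubmodule :=
    fun w hw => not_not.mp fun hwc => h w hwc hw.1 hw.2
  have hcenter : finrank F (center F L).toSubmodule = finrank F (center F L) := rfl
  have := Submodule.finrank_mono hle
  have := finrank_le_finrank_inf_ker_ad_add hD x y
  omega

end Centralizer

namespace Module.Basis

variable {ι F L : Type*} [LieRing L]

lemma lie_mem_of_forall_lie_mem [CommRing F] [LieAlgebra F L] (b : Basis ι F L)
    {S : Submodule F L} (h : ∀ i j, ⁅b i, b j⁆ ∈ S) (x y : L) : ⁅x, y⁆ ∈ S := by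
  have hB : (ad F L : L →ₗ[F] Module.End F L).compr₂ S.mkQ = 0 :=
    LinearMap.ext_basis b b fun i j => by simpa using h i j
  simpa using LinearMap.congr_fun₂ hB x y

lemma repr_eq_zero_of_lie_eq_zero [Field F] [LieAlgebra F L] [Fintype ι] (b : Basis ι F L)
    {p i : ι} (hi : ⁅b p, b i⁆ ≠ 0) (hk : ∀ k ≠ i, ⁅b p, b k⁆ = 0) {x : L}
    (hx : ⁅b p, x⁆ = 0) : b.repr x i = 0 := by
  have hexpand : ⁅b p, x⁆ = b.repr x i • ⁅b p, b i⁆ := by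
    conv_lhs => rw [← b.sum_repr x]
    rw [lie_sum, Finset.sum_eq_single i (fun k _ hki => by rw [lie_smul, hk k hki, smul_zero])
      (by simp), lie_smul]
  rw [hx, eq_comm, smul_eq_zero] at hexpand
  exact hexpand.resolve_right hi

end Module.Basis

structure IsHeisenbergBasis {F H : Type*} [Field F] [LieRing H] [LieAlgebra F H] {m : ℕ}
    (b : Basis (Fin (2 * m + 1)) F H) : Prop where
  lie_eq_last : ∀ i j : Fin (2 * m + 1), (j : ℕ) = (i : ℕ) + m → (i : ℕ) < m →
    ⁅b i, b j⁆ = b (Fin.last (2 * m))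
  lie_eq_zero : ∀ i j : Fin (2 * m + 1), ¬ ((j : ℕ) = (i : ℕ) + m ∧ (i : ℕ) < m) →
    ¬ ((i : ℕ) = (j : ℕ) + m ∧ (j : ℕ) < m) → ⁅b i, b j⁆ = 0

namespace IsHeisenbergBasis

variable {F H : Type*} [Field F] [LieRing H] [LieAlgebra F H] {m : ℕ}
  {b : Basis (Fin (2 * m + 1)) F H}

lemma lie_mem_span (hb : IsHeisenbergBasis b) (x y : H) :
    ⁅x, y⁆ ∈ F ∙ b (Fin.last (2 * m)) := by
  refine b.lie_mem_of_forall_lie_mem (fun i j => ?_) x y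
  by_cases h1 : (j : ℕ) = i + m ∧ (i : ℕ) < m
  · rw [hb.lie_eq_last i j h1.1 h1.2]
    exact Submodule.mem_span_singleton_self _
  by_cases h2 : (i : ℕ) = j + m ∧ (j : ℕ) < m
  · rw [← lie_skew, hb.lie_eq_last j i h2.1 h2.2]
    exact Submodule.neg_mem _ (Submodule.mem_span_singleton_self _)
  · rw [hb.lie_eq_zero i j h1 h2]
    exact Submodule.zero_mem _

lemma exists_partner (hb : IsHeisenbergBasis b) {i : Fin (2 * m + 1)}
    (hi : i ≠ Fin.last (2 * m)) :
    ∃ p, ⁅b p, b i⁆ ≠ 0 ∧ ∀ k ≠ i, ⁅b p, b k⁆ = 0 := by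
  have hi' : (i : ℕ) < 2 * m := lt_of_le_of_ne (Nat.lt_succ_iff.mp i.isLt) (Fin.val_ne_iff.mpr hi)
  rcases lt_or_ge (i : ℕ) m with h | h
  · let p : Fin (2 * m + 1) := ⟨i + m, by omega⟩
    have hp : (p : ℕ) = i + m := rfl
    refine ⟨p, ?_, fun k hk => hb.lie_eq_zero _ _ (fun hkp => by omega) fun hpk => ?_⟩
    · rw [← lie_skew, hb.lie_eq_last _ _ hp h, neg_ne_zero]
      exact b.ne_zero _
    · exact hk (Fin.ext (by omega))
  · let p : Fin (2 * m + 1) := ⟨i - m, by omega⟩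
    have hp : (p : ℕ) = i - m := rfl
    refine ⟨p, ?_, fun k hk => hb.lie_eq_zero _ _ (fun hkp => ?_) fun hpk => by omega⟩
    · rw [hb.lie_eq_last _ _ (by omega) (by omega)]
      exact b.ne_zero _
    · exact hk (Fin.ext (by omega))

lemma center_le_span (hb : IsHeisenbergBasis b) :
    (center F H).toSubmodule ≤ F ∙ b (Fin.last (2 * m)) := by
  intro x hx
  have hcoord : ∀ i ≠ Fin.last (2 * m), b.repr x i = 0 := fun i hi => by
    obtain ⟨p, hpi, hpk⟩ := hb.exists_partner hi
    exact b.repr_eq_zero_of_lie_eq_zero hpi hpk ((LieModule.mem_maxTrivSubmodule F H H x).mp hx _)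
  rw [← b.sum_repr x, Finset.sum_eq_single _ (fun i _ hi => by rw [hcoord i hi, zero_smul])
    (by simp)]
  exact Submodule.smul_mem _ _ (Submodule.mem_span_singleton_self _)

end IsHeisenbergBasis

/-- for `m ≥ 2`, the `(2m+1)`-dimensional Heisenberg Lie algebra — given by a
basis `e₀, …, e_{2m}` whose only nonzero brackets among basis vectors are
`⁅eᵢ, e_{i+m}⁆ = e_{2m} = -⁅e_{i+m}, eᵢ⁆` for `i < m` — has a connected commuting graph of
diameter 2. -/
theorem stmt14 (F : Type*) [Field F] (m : ℕ) (hm : 2 ≤ m)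
    (H : Type*) [LieRing H] [LieAlgebra F H]
    (b : Module.Basis (Fin (2 * m + 1)) F H)
    (hbr1 : ∀ i j : Fin (2 * m + 1), (j : ℕ) = (i : ℕ) + m → (i : ℕ) < m →
      ⁅b i, b j⁆ = b (Fin.last (2 * m)))
    (hbr2 : ∀ i j : Fin (2 * m + 1), ¬ ((j : ℕ) = (i : ℕ) + m ∧ (i : ℕ) < m) →
      ¬ ((i : ℕ) = (j : ℕ) + m ∧ (j : ℕ) < m) → ⁅b i, b j⁆ = 0) :
    (commutingGraph F H).Connected ∧ (commutingGraph F H).ediam = 2 := by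
  have hb : IsHeisenbergBasis b := ⟨hbr1, hbr2⟩
  have : FiniteDimensional F H := Module.Finite.of_basis b
  refine commutingGraph_connected_and_ediam_eq_two ?_
    (exists_notMem_center_lie_eq_zero hb.lie_mem_span ?_)
  · refine ⟨b ⟨0, by omega⟩, b ⟨m, by omega⟩, ?_⟩
    rw [hbr1 _ _ (by simp) (show 0 < m by omega)]
    exact b.ne_zero _
  · have hcenter := Submodule.finrank_mono hb.center_le_span
    rw [finrank_span_singleton (b.ne_zero _)] at hcenter ⊢
    rw [finrank_eq_card_basis b, Fintype.card_fin]
    change finrank F (center F H) ≤ 1 at hcenter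
    omega
end

section
/- Let L be a Lie algebra over a field F and let e₁, e₂, e₃, e₄ ∈ L be elements that are linearly independent modulo Z(L) and satisfy L = Z(L) + span{e₁, e₂, e₃, e₄}. Suppose ⁅e₁,e₄⁆ = ⁅e₂,e₃⁆ = 0, ⁅e₂,e₄⁆ = ⁅e₁,e₃⁆, and ⁅e₃,e₄⁆ = β⁅e₁,e₂⁆ + γ⁅e₁,e₃⁆ for some β, γ ∈ F; suppose further that ⁅e₁,e₂⁆ and ⁅e₁,e₃⁆ are linearly independent over F and that the polynomial x² + γx − β has no root in F. Then the commuting graph Γ(L) is disconnected. -/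
/-!
Modulo the center, the centralizer of `e₁` is `span {e₁, e₄}`. For a noncentral
`x ≡ a e₁ + b e₄`, the equation `⁅x, y⁆ = 0` is a linear system in the `e₂`, `e₃`
coordinates of `y` whose determinant `a² - γab - βb²` is `a²` if `b = 0` and otherwise
`b²` times the value of `ζ² + γζ - β` at `ζ = -a/b`, so it is nonzero. Hence everything
commuting with such an `x` lies in the centralizer of `e₁` again: the noncentral elements
commuting with `e₁` form a union of connected components of the commuting graph, which
contains `e₁` but not `e₂`.
-/

theorem SimpleGraph.Reachable.of_adj_imp {V : Type*} {G : SimpleGraph V} {P : V → Prop}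
    (hP : ∀ ⦃u v⦄, G.Adj u v → P u → P v) {u v : V} (h : G.Reachable u v) (hu : P u) :
    P v := by
  obtain ⟨p⟩ := h
  induction p with
  | nil => exact hu
  | cons huv _ ih => exact ih (hP huv hu)

theorem Submodule.exists_sub_mem_of_sup_span_eq_top {R M : Type*} [Ring R] [AddCommGroup M]
    [Module R M] {p : Submodule R M} {a b c d : M} (h : p ⊔ span R {a, b, c, d} = ⊤)
    (x : M) : ∃ r₁ r₂ r₃ r₄ : R, x - (r₁ • a + r₂ • b + r₃ • c + r₄ • d) ∈ p := by
  obtain ⟨z, hz, s, hs, rfl⟩ := mem_sup.mp (h ▸ mem_top : x ∈ p ⊔ span R {a, b, c, d})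
  obtain ⟨r₁, s₁, hs₁, rfl⟩ := mem_span_insert.mp hs
  obtain ⟨r₂, s₂, hs₂, rfl⟩ := mem_span_insert.mp hs₁
  obtain ⟨r₃, s₃, hs₃, rfl⟩ := mem_span_insert.mp hs₂
  obtain ⟨r₄, rfl⟩ := mem_span_singleton.mp hs₃
  exact ⟨r₁, r₂, r₃, r₄, by rwa [add_sub_assoc, sub_eq_zero.mpr (by abel), add_zero]⟩

theorem sq_sub_mul_sub_mul_sq_ne_zero {K : Type*} [Field K] {β γ a b : K}
    (hroot : ∀ ζ : K, ζ ^ 2 + γ * ζ - β ≠ 0) (hab : a ≠ 0 ∨ b ≠ 0) :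
    a ^ 2 - γ * a * b - β * b ^ 2 ≠ 0 := by
  rcases eq_or_ne b 0 with rfl | hb
  · simpa using hab.resolve_right (not_not.mpr rfl)
  · have : b ^ 2 * ((-a / b) ^ 2 + γ * (-a / b) - β) = a ^ 2 - γ * a * b - β * b ^ 2 := by
      field_simp
      ring
    exact this ▸ mul_ne_zero (pow_ne_zero 2 hb) (hroot _)

namespace LieAlgebra

variable {R L : Type*} [CommRing R] [LieRing L] [LieAlgebra R L]

theorem lie_eq_zero_of_mem_center_left {z : L} (hz : z ∈ center R L) (x : L) : ⁅z, x⁆ = 0 := by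
  rw [← lie_skew, (LieModule.mem_maxTrivSubmodule R L L z).mp hz x, neg_zero]

theorem lie_eq_lie_of_sub_mem_center {x x' y y' : L} (hx : x - x' ∈ center R L)
    (hy : y - y' ∈ center R L) : ⁅x, y⁆ = ⁅x', y'⁆ := by
  have h₁ := lie_eq_zero_of_mem_center_left hx y
  have h₂ := (LieModule.mem_maxTrivSubmodule R L L _).mp hy x'
  rw [sub_lie] at h₁
  rw [lie_sub] at h₂
  rw [sub_eq_zero.mp h₁, sub_eq_zero.mp h₂]

end LieAlgebra

section FourGenerators

open LieAlgebra

variable {L : Type*} [LieRing L] {e₁ e₂ e₃ e₄ : L}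

theorem lie_linearCombination_eq {R : Type*} [CommRing R] [LieAlgebra R L] {β γ : R}
    (h14 : ⁅e₁, e₄⁆ = 0) (h23 : ⁅e₂, e₃⁆ = 0) (h24 : ⁅e₂, e₄⁆ = ⁅e₁, e₃⁆)
    (h34 : ⁅e₃, e₄⁆ = β • ⁅e₁, e₂⁆ + γ • ⁅e₁, e₃⁆) (x₁ x₂ x₃ x₄ y₁ y₂ y₃ y₄ : R) :
    ⁅x₁ • e₁ + x₂ • e₂ + x₃ • e₃ + x₄ • e₄, y₁ • e₁ + y₂ • e₂ + y₃ • e₃ + y₄ • e₄⁆ =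
      (x₁ * y₂ - x₂ * y₁ + β * (x₃ * y₄ - x₄ * y₃)) • ⁅e₁, e₂⁆ +
      (x₁ * y₃ - x₃ * y₁ + x₂ * y₄ - x₄ * y₂ + γ * (x₃ * y₄ - x₄ * y₃)) • ⁅e₁, e₃⁆ := by
  have h21 : ⁅e₂, e₁⁆ = -⁅e₁, e₂⁆ := (lie_skew _ _).symm
  have h31 : ⁅e₃, e₁⁆ = -⁅e₁, e₃⁆ := (lie_skew _ _).symm
  have h41 : ⁅e₄, e₁⁆ = 0 := by rw [← lie_skew, h14, neg_zero]
  have h32 : ⁅e₃, e₂⁆ = 0 := by rw [← lie_skew, h23, neg_zero]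
  have h42 : ⁅e₄, e₂⁆ = -⁅e₁, e₃⁆ := by rw [← lie_skew, h24]
  have h43 : ⁅e₄, e₃⁆ = -(β • ⁅e₁, e₂⁆ + γ • ⁅e₁, e₃⁆) := by rw [← lie_skew, h34]
  simp only [add_lie, lie_add, smul_lie, lie_smul, lie_self, h14, h23, h24, h34, h21, h31,
    h41, h32, h42, h43]
  module

variable {F : Type*} [Field F] [LieAlgebra F L] {β γ : F}

theorem lie_linearCombination_e₁_eq_zero_iff
    (h14 : ⁅e₁, e₄⁆ = 0) (h23 : ⁅e₂, e₃⁆ = 0) (h24 : ⁅e₂, e₄⁆ = ⁅e₁, e₃⁆)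
    (h34 : ⁅e₃, e₄⁆ = β • ⁅e₁, e₂⁆ + γ • ⁅e₁, e₃⁆)
    (hbr : LinearIndependent F ![⁅e₁, e₂⁆, ⁅e₁, e₃⁆]) (y₁ y₂ y₃ y₄ : F) :
    ⁅y₁ • e₁ + y₂ • e₂ + y₃ • e₃ + y₄ • e₄, e₁⁆ = 0 ↔ y₂ = 0 ∧ y₃ = 0 := by
  have h := lie_linearCombination_eq h14 h23 h24 h34 y₁ y₂ y₃ y₄ 1 0 0 0
  simp only [one_smul, zero_smul, add_zero, mul_zero, mul_one, sub_zero, zero_sub] at h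
  rw [h]
  refine ⟨fun h => by simpa using hbr.eq_zero_of_pair h, ?_⟩
  rintro ⟨rfl, rfl⟩
  simp

theorem eq_zero_of_lie_linearCombination_eq_zero
    (h14 : ⁅e₁, e₄⁆ = 0) (h23 : ⁅e₂, e₃⁆ = 0) (h24 : ⁅e₂, e₄⁆ = ⁅e₁, e₃⁆)
    (h34 : ⁅e₃, e₄⁆ = β • ⁅e₁, e₂⁆ + γ • ⁅e₁, e₃⁆)
    (hbr : LinearIndependent F ![⁅e₁, e₂⁆, ⁅e₁, e₃⁆])
    (hroot : ∀ ζ : F, ζ ^ 2 + γ * ζ - β ≠ 0) {a b : F} (hab : a ≠ 0 ∨ b ≠ 0)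
    {y₁ y₂ y₃ y₄ : F} (h : ⁅a • e₁ + b • e₄, y₁ • e₁ + y₂ • e₂ + y₃ • e₃ + y₄ • e₄⁆ = 0) :
    y₂ = 0 ∧ y₃ = 0 := by
  have hcoeff := lie_linearCombination_eq h14 h23 h24 h34 a 0 0 b y₁ y₂ y₃ y₄
  simp only [zero_smul, add_zero, h] at hcoeff
  obtain ⟨h₁, h₂⟩ := hbr.eq_zero_of_pair hcoeff.symm
  have hdet := sq_sub_mul_sub_mul_sq_ne_zero hroot hab
  refine ⟨(mul_eq_zero.mp ?_).resolve_left hdet, (mul_eq_zero.mp ?_).resolve_left hdet⟩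
  · linear_combination (a - γ * b) * h₁ + β * b * h₂
  · linear_combination b * h₁ + a * h₂

theorem lie_e₁_eq_zero_of_lie_eq_zero
    (hspan : (center F L).toSubmodule ⊔ Submodule.span F {e₁, e₂, e₃, e₄} = ⊤)
    (h14 : ⁅e₁, e₄⁆ = 0) (h23 : ⁅e₂, e₃⁆ = 0) (h24 : ⁅e₂, e₄⁆ = ⁅e₁, e₃⁆)
    (h34 : ⁅e₃, e₄⁆ = β • ⁅e₁, e₂⁆ + γ • ⁅e₁, e₃⁆)
    (hbr : LinearIndependent F ![⁅e₁, e₂⁆, ⁅e₁, e₃⁆])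
    (hroot : ∀ ζ : F, ζ ^ 2 + γ * ζ - β ≠ 0) {x y : L} (hx : x ∉ center F L)
    (hxe : ⁅x, e₁⁆ = 0) (hxy : ⁅x, y⁆ = 0) : ⁅y, e₁⁆ = 0 := by
  obtain ⟨x₁, x₂, x₃, x₄, hx'⟩ := Submodule.exists_sub_mem_of_sup_span_eq_top hspan x
  obtain ⟨y₁, y₂, y₃, y₄, hy'⟩ := Submodule.exists_sub_mem_of_sup_span_eq_top hspan y
  have he₁ : e₁ - e₁ ∈ center F L := by simp
  rw [lie_eq_lie_of_sub_mem_center hx' he₁,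
    lie_linearCombination_e₁_eq_zero_iff h14 h23 h24 h34 hbr] at hxe
  obtain ⟨rfl, rfl⟩ := hxe
  have hx₁₄ : x₁ ≠ 0 ∨ x₄ ≠ 0 := by
    by_contra! h
    obtain ⟨rfl, rfl⟩ := h
    exact hx (by simpa using hx')
  rw [lie_eq_lie_of_sub_mem_center hx' hy', zero_smul, zero_smul, add_zero, add_zero] at hxy
  rw [lie_eq_lie_of_sub_mem_center hy' he₁,
    lie_linearCombination_e₁_eq_zero_iff h14 h23 h24 h34 hbr]
  exact eq_zero_of_lie_linearCombination_eq_zero h14 h23 h24 h34 hbr hroot hx₁₄ hxy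

end FourGenerators

theorem stmt16_general (F : Type*) [Field F] (L : Type*) [LieRing L] [LieAlgebra F L]
    (e₁ e₂ e₃ e₄ : L) (β γ : F)
    (hspan : (LieAlgebra.center F L).toSubmodule ⊔
      Submodule.span F {e₁, e₂, e₃, e₄} = ⊤)
    (h14 : ⁅e₁, e₄⁆ = 0) (h23 : ⁅e₂, e₃⁆ = 0) (h24 : ⁅e₂, e₄⁆ = ⁅e₁, e₃⁆)
    (h34 : ⁅e₃, e₄⁆ = β • ⁅e₁, e₂⁆ + γ • ⁅e₁, e₃⁆)
    (hbr : LinearIndependent F ![⁅e₁, e₂⁆, ⁅e₁, e₃⁆])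
    (hroot : ∀ ζ : F, ζ ^ 2 + γ * ζ - β ≠ 0) :
    ¬ (commutingGraph F L).Connected := by
  intro hconn
  have he₁₂ : ⁅e₁, e₂⁆ ≠ 0 := by simpa using hbr.ne_zero 0
  have he₁ : e₁ ∉ LieAlgebra.center F L := fun h =>
    he₁₂ (LieAlgebra.lie_eq_zero_of_mem_center_left h e₂)
  have he₂ : e₂ ∉ LieAlgebra.center F L := fun h =>
    he₁₂ ((LieModule.mem_maxTrivSubmodule F L L e₂).mp h e₁)
  have hclosed : ∀ ⦃x y : {x : L // x ∉ LieAlgebra.center F L}⦄, (commutingGraph F L).Adj x y →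
      ⁅(x : L), e₁⁆ = 0 → ⁅(y : L), e₁⁆ = 0 := fun x _ hxy hx =>
    lie_e₁_eq_zero_of_lie_eq_zero hspan h14 h23 h24 h34 hbr hroot x.2 hx hxy.2
  have he₂₁ : ⁅e₂, e₁⁆ = 0 :=
    (hconn.preconnected ⟨e₁, he₁⟩ ⟨e₂, he₂⟩).of_adj_imp hclosed (lie_self e₁)
  exact he₁₂ (by rw [← lie_skew, he₂₁, neg_zero])

/-- let `e₁, e₂, e₃, e₄ ∈ L` be linearly independent modulo the center with
`L = Z(L) + span {e₁, e₂, e₃, e₄}`, `⁅e₁,e₄⁆ = ⁅e₂,e₃⁆ = 0`, `⁅e₂,e₄⁆ = ⁅e₁,e₃⁆`,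
`⁅e₃,e₄⁆ = β⁅e₁,e₂⁆ + γ⁅e₁,e₃⁆` with `⁅e₁,e₂⁆, ⁅e₁,e₃⁆` linearly independent, and
suppose `x² + γx - β` has no root in `F`. Then the commuting graph of `L` is disconnected. -/
theorem stmt16 (F : Type*) [Field F] (L : Type*) [LieRing L] [LieAlgebra F L]
    (e₁ e₂ e₃ e₄ : L) (β γ : F)
    (hli : LinearIndependent F fun i =>
      (Submodule.Quotient.mk (![e₁, e₂, e₃, e₄] i) :
        L ⧸ (LieAlgebra.center F L).toSubmodule))
    (hspan : (LieAlgebra.center F L).toSubmodule ⊔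
      Submodule.span F {e₁, e₂, e₃, e₄} = ⊤)
    (h14 : ⁅e₁, e₄⁆ = 0) (h23 : ⁅e₂, e₃⁆ = 0) (h24 : ⁅e₂, e₄⁆ = ⁅e₁, e₃⁆)
    (h34 : ⁅e₃, e₄⁆ = β • ⁅e₁, e₂⁆ + γ • ⁅e₁, e₃⁆)
    (hbr : LinearIndependent F ![⁅e₁, e₂⁆, ⁅e₁, e₃⁆])
    (hroot : ∀ ζ : F, ζ ^ 2 + γ * ζ - β ≠ 0) :
    ¬ (commutingGraph F L).Connected :=
  stmt16_general F L e₁ e₂ e₃ e₄ β γ hspan h14 h23 h24 h34 hbr hroot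
end

section
/- Let F be a field and let L = M₂(F) be the Lie algebra of all 2×2 matrices over F with bracket ⁅A, B⁆ = AB − BA. Then the commuting graph Γ(L) is disconnected. -/
attribute [local instance 100] LieRing.ofAssociativeRing

/-!
Identify the traceless part of a `2 × 2` matrix `a` with the vector
`(a₀₁, a₁₀, a₀₀ - a₁₁)` of `F³`. The entries of `⁅a, b⁆` are then, up to sign, the coordinates
of the cross product of the vectors of `a` and `b`, so two matrices commute iff their vectors are
proportional. A matrix is central iff its vector vanishes, and being proportional to a fixed
nonzero vector is transitive; hence any two matrices joined by a path in the commuting graph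
commute, while `E₀₀` and `E₀₁` do not.
-/

open Matrix

def sl2Coords {R : Type*} [CommRing R] (a : Matrix (Fin 2) (Fin 2) R) : Fin 3 → R :=
  ![a 0 1, a 1 0, a 0 0 - a 1 1]

theorem lie_eq_of_sl2Coords_cross {R : Type*} [CommRing R] (a b : Matrix (Fin 2) (Fin 2) R) :
    ⁅a, b⁆ = let w := sl2Coords a ⨯₃ sl2Coords b; !![w 2, w 1; w 0, -w 2] := by
  ext i j
  fin_cases i <;> fin_cases j <;>
    simp [Ring.lie_def, mul_apply, cross_apply, sl2Coords] <;> ring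

theorem lie_eq_zero_iff_sl2Coords_cross_eq_zero {R : Type*} [CommRing R]
    (a b : Matrix (Fin 2) (Fin 2) R) : ⁅a, b⁆ = 0 ↔ sl2Coords a ⨯₃ sl2Coords b = 0 := by
  rw [lie_eq_of_sl2Coords_cross, ← Matrix.ext_iff, funext_iff]
  simp [Fin.forall_fin_succ]
  tauto

theorem sl2Coords_ne_zero_of_notMem_center {R : Type*} [CommRing R]
    {b : Matrix (Fin 2) (Fin 2) R} (hb : b ∉ LieAlgebra.center R (Matrix (Fin 2) (Fin 2) R)) :
    sl2Coords b ≠ 0 := by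
  contrapose! hb
  rw [LieAlgebra.center, LieModule.mem_maxTrivSubmodule]
  intro x
  rw [lie_eq_zero_iff_sl2Coords_cross_eq_zero, hb, map_zero]

theorem cross_eq_zero_trans {F : Type*} [Field F] {u v w : Fin 3 → F} (hv : v ≠ 0)
    (huv : u ⨯₃ v = 0) (hvw : v ⨯₃ w = 0) : u ⨯₃ w = 0 := by
  have smul_of_cross_eq_zero : ∀ x, x ⨯₃ v = 0 → ∃ c : F, c • v = x := fun x hx => by
    by_contra! h
    rw [← LinearIndependent.pair_iff' hv] at h
    exact crossProduct_ne_zero_iff_linearIndependent.2 h (by rw [← cross_anticomm, hx, neg_zero])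
  obtain ⟨α, rfl⟩ := smul_of_cross_eq_zero u huv
  obtain ⟨β, rfl⟩ := smul_of_cross_eq_zero w (by rw [← cross_anticomm, hvw, neg_zero])
  simp [cross_self]

def LieAlgebra.IsCommutativeTransitive (R L : Type*) [CommRing R] [LieRing L] [LieAlgebra R L] :
    Prop :=
  ∀ {a b c : L}, b ∉ LieAlgebra.center R L → ⁅a, b⁆ = 0 → ⁅b, c⁆ = 0 → ⁅a, c⁆ = 0

theorem Matrix.isCommutativeTransitive_fin_two (F : Type*) [Field F] :
    LieAlgebra.IsCommutativeTransitive F (Matrix (Fin 2) (Fin 2) F) := by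
  intro a b c hb hab hbc
  rw [lie_eq_zero_iff_sl2Coords_cross_eq_zero] at *
  exact cross_eq_zero_trans (sl2Coords_ne_zero_of_notMem_center hb) hab hbc

namespace commutingGraph

variable {R L : Type*} [CommRing R] [LieRing L] [LieAlgebra R L]

theorem lie_eq_zero_of_reachable (hL : LieAlgebra.IsCommutativeTransitive R L)
    {v w : {x : L // x ∉ LieAlgebra.center R L}} (hvw : (commutingGraph R L).Reachable v w) :
    ⁅(v : L), (w : L)⁆ = 0 := by
  obtain ⟨p⟩ := hvw
  induction p with
  | nil => exact lie_self _
  | @cons _ u _ hadj _ ih => exact hL u.2 hadj.2 ih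

theorem not_connected_of_lie_ne_zero (hL : LieAlgebra.IsCommutativeTransitive R L) {x y : L}
    (hxy : ⁅x, y⁆ ≠ 0) : ¬ (commutingGraph R L).Connected := by
  have hx : x ∉ LieAlgebra.center R L := fun hx =>
    hxy (by rw [← lie_skew, (LieModule.mem_maxTrivSubmodule R L L x).1 hx y, neg_zero])
  have hy : y ∉ LieAlgebra.center R L := fun hy =>
    hxy ((LieModule.mem_maxTrivSubmodule R L L y).1 hy x)
  exact fun h => hxy (lie_eq_zero_of_reachable hL (h ⟨x, hx⟩ ⟨y, hy⟩))

end commutingGraph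

/-- the commuting graph of the Lie algebra of 2×2 matrices over any field
(with bracket `⁅A, B⁆ = AB - BA`) is disconnected. -/
theorem stmt17 (F : Type*) [Field F] :
    ¬ (commutingGraph F (Matrix (Fin 2) (Fin 2) F)).Connected := by
  refine commutingGraph.not_connected_of_lie_ne_zero (Matrix.isCommutativeTransitive_fin_two F)
    (x := single 0 0 1) (y := single 0 1 1) ?_
  rw [Ne, lie_eq_zero_iff_sl2Coords_cross_eq_zero]
  simp [sl2Coords, cross_apply]
end

section
/- Let F be a field and L a Lie algebra over F admitting a basis e₁, e₂, e₃, e₄ whose brackets satisfy ⁅e₂,e₃⁆ = e₁, ⁅e₄,e₁⁆ = e₁, ⁅e₄,e₂⁆ = e₂, and ⁅e₁,e₂⁆ = ⁅e₁,e₃⁆ = ⁅e₃,e₄⁆ = 0 (this is the solvable Lie algebra s₄,₁₁). Then the commuting graph Γ(L) is connected and diam(Γ(L)) = 3. -/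
namespace commutingGraph

variable {F L : Type*} [CommRing F] [LieRing L] [LieAlgebra F L]
  {x y : {x : L // x ∉ LieAlgebra.center F L}}

lemma edist_le_one_of_lie_eq_zero_s18 (h : ⁅(x : L), (y : L)⁆ = 0) :
    (commutingGraph F L).edist x y ≤ 1 := by
  rw [SimpleGraph.edist_le_one_iff_adj_or_eq]
  by_cases hxy : x = y
  · exact .inr hxy
  · exact .inl ⟨hxy, h⟩

lemma edist_le_three_of_forall_exists_lie_eq_zero (A : Set L)
    (hA : ∀ a ∈ A, ∀ a' ∈ A, ⁅a, a'⁆ = 0)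
    (hcover : ∀ z : L, z ∉ LieAlgebra.center F L →
      ∃ a ∈ A, a ∉ LieAlgebra.center F L ∧ ⁅z, a⁆ = 0)
    (x y : {x : L // x ∉ LieAlgebra.center F L}) :
    (commutingGraph F L).edist x y ≤ 3 := by
  obtain ⟨a, haA, ha, hxa⟩ := hcover x x.2
  obtain ⟨a', ha'A, ha', hya'⟩ := hcover y y.2
  let v : {x : L // x ∉ LieAlgebra.center F L} := ⟨a, ha⟩
  let v' : {x : L // x ∉ LieAlgebra.center F L} := ⟨a', ha'⟩
  have hv'y : ⁅(v' : L), (y : L)⁆ = 0 := by rw [← lie_skew, hya', neg_zero]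
  calc (commutingGraph F L).edist x y
      ≤ (commutingGraph F L).edist x v + (commutingGraph F L).edist v v' +
          (commutingGraph F L).edist v' y :=
        SimpleGraph.edist_triangle.trans (by gcongr; exact SimpleGraph.edist_triangle)
    _ ≤ 1 + 1 + 1 := by
        gcongr
        exacts [edist_le_one_of_lie_eq_zero_s18 hxa, edist_le_one_of_lie_eq_zero_s18 (hA a haA a' ha'A),
          edist_le_one_of_lie_eq_zero_s18 hv'y]
    _ = 3 := by norm_num

lemma three_le_edist (hxy : ⁅(x : L), (y : L)⁆ ≠ 0)
    (hcommon : ∀ z : L, ⁅(x : L), z⁆ = 0 → ⁅(y : L), z⁆ = 0 → z ∈ LieAlgebra.center F L) :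
    3 ≤ (commutingGraph F L).edist x y := by
  refine Order.add_one_le_of_lt (SimpleGraph.two_lt_edist_iff.mpr ⟨?_, ?_, ?_⟩)
  · rintro rfl
    exact hxy (lie_self _)
  · exact fun h => hxy h.2
  · ext z
    simp only [SimpleGraph.mem_commonNeighbors, Set.mem_empty_iff_false, iff_false]
    exact fun ⟨hxz, hzy⟩ => z.2 (hcommon z hxz.2 hzy.2)

end commutingGraph

/-- The basis `b 0, b 1, b 2, b 3` plays the role of `e₁, e₂, e₃, e₄`. -/
structure IsS411Basis {F L : Type*} [CommRing F] [LieRing L] [LieAlgebra F L]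
    (b : Module.Basis (Fin 4) F L) : Prop where
  lie_one_two : ⁅b 1, b 2⁆ = b 0
  lie_three_zero : ⁅b 3, b 0⁆ = b 0
  lie_three_one : ⁅b 3, b 1⁆ = b 1
  lie_zero_one : ⁅b 0, b 1⁆ = 0
  lie_zero_two : ⁅b 0, b 2⁆ = 0
  lie_two_three : ⁅b 2, b 3⁆ = 0

namespace IsS411Basis

variable {F L : Type*} [CommRing F] [LieRing L] [LieAlgebra F L] {b : Module.Basis (Fin 4) F L}

lemma lie_eq (hb : IsS411Basis b) (x y : L) : ⁅x, y⁆ =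
    (b.repr x 1 * b.repr y 2 - b.repr x 2 * b.repr y 1
      + b.repr x 3 * b.repr y 0 - b.repr x 0 * b.repr y 3) • b 0
    + (b.repr x 3 * b.repr y 1 - b.repr x 1 * b.repr y 3) • b 1 := by
  have h21 : ⁅b 2, b 1⁆ = -b 0 := by rw [← lie_skew, hb.lie_one_two]
  have h03 : ⁅b 0, b 3⁆ = -b 0 := by rw [← lie_skew, hb.lie_three_zero]
  have h13 : ⁅b 1, b 3⁆ = -b 1 := by rw [← lie_skew, hb.lie_three_one]
  have h10 : ⁅b 1, b 0⁆ = 0 := by rw [← lie_skew, hb.lie_zero_one, neg_zero]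
  have h20 : ⁅b 2, b 0⁆ = 0 := by rw [← lie_skew, hb.lie_zero_two, neg_zero]
  have h32 : ⁅b 3, b 2⁆ = 0 := by rw [← lie_skew, hb.lie_two_three, neg_zero]
  conv_lhs => rw [← b.sum_repr x, ← b.sum_repr y]
  simp only [Fin.sum_univ_four, add_lie, lie_add, smul_lie, lie_smul, lie_self,
    hb.lie_one_two, hb.lie_three_zero, hb.lie_three_one, hb.lie_zero_one, hb.lie_zero_two,
    hb.lie_two_three, h21, h03, h13, h10, h20, h32]
  module

lemma lie_eq_zero_iff (hb : IsS411Basis b) (x y : L) : ⁅x, y⁆ = 0 ↔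
    b.repr x 1 * b.repr y 2 - b.repr x 2 * b.repr y 1
      + b.repr x 3 * b.repr y 0 - b.repr x 0 * b.repr y 3 = 0 ∧
    b.repr x 3 * b.repr y 1 - b.repr x 1 * b.repr y 3 = 0 := by
  rw [hb.lie_eq, ← b.repr.map_eq_zero_iff, Finsupp.ext_iff]
  simp [Fin.forall_fin_succ, Finsupp.single_apply]

lemma eq_zero_of_lie_one_of_lie_three (hb : IsS411Basis b) {z : L} (h1 : ⁅b 1, z⁆ = 0)
    (h3 : ⁅b 3, z⁆ = 0) : z = 0 := by
  rw [hb.lie_eq_zero_iff] at h1 h3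
  rw [← b.repr.map_eq_zero_iff]
  ext i
  fin_cases i <;> simp_all

lemma center_eq_bot (hb : IsS411Basis b) : LieAlgebra.center F L = ⊥ := by
  ext z
  refine ⟨fun hz => hb.eq_zero_of_lie_one_of_lie_three (hz (b 1)) (hz (b 3)), ?_⟩
  rintro rfl
  exact zero_mem _

lemma lie_eq_zero_of_repr_eq_zero (hb : IsS411Basis b) {a a' : L}
    (ha : b.repr a 1 = 0 ∧ b.repr a 3 = 0) (ha' : b.repr a' 1 = 0 ∧ b.repr a' 3 = 0) :
    ⁅a, a'⁆ = 0 := by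
  simp [hb.lie_eq_zero_iff, ha, ha']

lemma exists_repr_eq_zero_lie_eq_zero (hb : IsS411Basis b) {x : L} (hx : x ≠ 0) :
    ∃ a, (b.repr a 1 = 0 ∧ b.repr a 3 = 0) ∧ a ≠ 0 ∧ ⁅x, a⁆ = 0 := by
  by_cases h : b.repr x 1 = 0 ∧ b.repr x 3 = 0
  · exact ⟨x, h, hx, lie_self x⟩
  · refine ⟨-b.repr x 1 • b 0 + b.repr x 3 • b 2, by simp, ?_, ?_⟩
    · intro ha
      exact h ⟨by simpa using congrArg (b.repr · 0) ha, by simpa using congrArg (b.repr · 2) ha⟩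
    · rw [hb.lie_eq_zero_iff]
      simp [mul_comm]

end IsS411Basis

open SimpleGraph in
/-- for the solvable Lie algebra `s₄,₁₁` over a field `F`, given by a basis
`e₁, e₂, e₃, e₄` with `⁅e₂,e₃⁆ = e₁`, `⁅e₄,e₁⁆ = e₁`, `⁅e₄,e₂⁆ = e₂` and all other brackets
of basis vectors zero, the commuting graph is connected with diameter 3. -/
theorem stmt18 (F : Type*) [Field F] (L : Type*) [LieRing L] [LieAlgebra F L]
    (b : Module.Basis (Fin 4) F L)
    (h23 : ⁅b 1, b 2⁆ = b 0) (h41 : ⁅b 3, b 0⁆ = b 0) (h42 : ⁅b 3, b 1⁆ = b 1)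
    (h12 : ⁅b 0, b 1⁆ = 0) (h13 : ⁅b 0, b 2⁆ = 0) (h34 : ⁅b 2, b 3⁆ = 0) :
    (commutingGraph F L).Connected ∧ (commutingGraph F L).ediam = 3 := by
  have hb : IsS411Basis b := ⟨h23, h41, h42, h12, h13, h34⟩
  have not_mem_center (x : L) : x ∉ LieAlgebra.center F L ↔ x ≠ 0 := by simp [hb.center_eq_bot]
  have hle : ∀ x y, (commutingGraph F L).edist x y ≤ 3 :=
    commutingGraph.edist_le_three_of_forall_exists_lie_eq_zero
      {a | b.repr a 1 = 0 ∧ b.repr a 3 = 0}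
      (fun _ ha _ ha' => hb.lie_eq_zero_of_repr_eq_zero ha ha')
      (by simpa only [not_mem_center, Set.mem_ofPred_eq] using
        fun _ => hb.exists_repr_eq_zero_lie_eq_zero)
  let e₂ : {x : L // x ∉ LieAlgebra.center F L} := ⟨b 1, (not_mem_center _).2 (b.ne_zero 1)⟩
  let e₄ : {x : L // x ∉ LieAlgebra.center F L} := ⟨b 3, (not_mem_center _).2 (b.ne_zero 3)⟩
  have hge : 3 ≤ (commutingGraph F L).edist e₂ e₄ := by
    refine commutingGraph.three_le_edist ?_ fun z h₂ h₄ => ?_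
    · change ⁅b 1, b 3⁆ ≠ 0
      rw [← lie_skew, hb.lie_three_one, neg_ne_zero]
      exact b.ne_zero 1
    · simp [hb.center_eq_bot, hb.eq_zero_of_lie_one_of_lie_three h₂ h₄]
  have hdiam : (commutingGraph F L).ediam = 3 :=
    le_antisymm (ediam_le_iff.mpr hle) (hge.trans edist_le_ediam)
  have : Nonempty {x : L // x ∉ LieAlgebra.center F L} := ⟨e₂⟩
  exact ⟨connected_of_ediam_ne_top (by simp [hdiam]), hdiam⟩
end

section
/- Let L be a Lie algebra over the real field ℝ admitting a basis e₁, e₂, e₃, e₄ whose brackets satisfy ⁅e₃,e₁⁆ = e₁, ⁅e₃,e₂⁆ = e₂, ⁅e₄,e₁⁆ = −e₂, ⁅e₄,e₂⁆ = e₁, and ⁅e₁,e₂⁆ = ⁅e₃,e₄⁆ = 0 (this is the solvable Lie algebra s₄,₁₂). Then the commuting graph Γ(L) is disconnected. -/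
theorem SimpleGraph.Reachable.mem_of_adj_closed_s19 {V : Type*} {G : SimpleGraph V} {S : Set V}
    (hS : ∀ u v, G.Adj u v → u ∈ S → v ∈ S) {u v : V} (huv : G.Reachable u v) (hu : u ∈ S) :
    v ∈ S := by
  obtain ⟨w⟩ := huv
  induction w with
  | nil => exact hu
  | cons hadj _ ih => exact ih (hS _ _ hadj hu)

theorem SimpleGraph.not_connected_of_adj_closed_s19 {V : Type*} {G : SimpleGraph V} {S : Set V}
    (hS : ∀ u v, G.Adj u v → u ∈ S → v ∈ S) {u v : V} (hu : u ∈ S) (hv : v ∉ S) :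
    ¬ G.Connected := fun hG => hv ((hG.preconnected u v).mem_of_adj_closed_s19 hS hu)

theorem commutingGraph_not_connected_of_centralizer_subset {F L : Type*} [CommRing F]
    [LieRing L] [LieAlgebra F L] (S : Set L)
    (hS : ∀ x ∈ S, x ∉ LieAlgebra.center F L → ∀ y, ⁅x, y⁆ = 0 → y ∈ S)
    {x y : L} (hxS : x ∈ S) (hx : x ∉ LieAlgebra.center F L)
    (hyS : y ∉ S) (hy : y ∉ LieAlgebra.center F L) :
    ¬ (commutingGraph F L).Connected :=
  SimpleGraph.not_connected_of_adj_closed_s19 (S := {v | (v : L) ∈ S})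
    (fun u v huv hu => hS u hu u.2 v huv.2) (u := ⟨x, hx⟩) (v := ⟨y, hy⟩) hxS hyS

theorem LieAlgebra.notMem_center_of_lie_ne_zero_s19 {R L : Type*} [CommRing R] [LieRing L]
    [LieAlgebra R L] {x y : L} (h : ⁅x, y⁆ ≠ 0) : y ∉ LieAlgebra.center R L :=
  fun hy => h ((LieModule.mem_maxTrivSubmodule R L L y).1 hy x)

section S412

variable {L : Type*} [LieRing L] [LieAlgebra ℝ L] (b : Module.Basis (Fin 4) ℝ L)

theorem eq_repr_zero_smul_add_repr_one_smul {x : L} (hx2 : b.repr x 2 = 0)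
    (hx3 : b.repr x 3 = 0) : x = b.repr x 0 • b 0 + b.repr x 1 • b 1 := by
  nth_rewrite 1 [← b.sum_repr x]
  rw [Fin.sum_univ_four, hx2, hx3, zero_smul, zero_smul, add_zero, add_zero]

variable (h31 : ⁅b 2, b 0⁆ = b 0) (h32 : ⁅b 2, b 1⁆ = b 1)
  (h41 : ⁅b 3, b 0⁆ = -b 1) (h42 : ⁅b 3, b 1⁆ = b 0) (h12 : ⁅b 0, b 1⁆ = 0)
include h31 h32 h41 h42 h12

theorem lie_eq_of_repr_two_eq_zero_of_repr_three_eq_zero {x : L} (hx2 : b.repr x 2 = 0)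
    (hx3 : b.repr x 3 = 0) (y : L) :
    ⁅y, x⁆ = (b.repr y 2 * b.repr x 0 + b.repr y 3 * b.repr x 1) • b 0 +
      (b.repr y 2 * b.repr x 1 - b.repr y 3 * b.repr x 0) • b 1 := by
  have h21 : ⁅b 1, b 0⁆ = 0 := by rw [← lie_skew, h12, neg_zero]
  conv_lhs => rw [eq_repr_zero_smul_add_repr_one_smul b hx2 hx3, ← b.sum_repr y]
  simp only [Fin.sum_univ_four, add_lie, lie_add, smul_lie, lie_smul, h31, h32, h41, h42, h12,
    h21, lie_self, smul_zero, smul_neg]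
  module

theorem repr_two_eq_zero_and_repr_three_eq_zero_of_lie_eq_zero {x y : L} (hx : x ≠ 0)
    (hx2 : b.repr x 2 = 0) (hx3 : b.repr x 3 = 0) (hxy : ⁅x, y⁆ = 0) :
    b.repr y 2 = 0 ∧ b.repr y 3 = 0 := by
  have hyx : ⁅y, x⁆ = 0 := by rw [← lie_skew, hxy, neg_zero]
  rw [lie_eq_of_repr_two_eq_zero_of_repr_three_eq_zero b h31 h32 h41 h42 h12 hx2 hx3] at hyx
  have h0 := congrArg (b.coord 0) hyx
  have h1 := congrArg (b.coord 1) hyx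
  simp at h0 h1
  have hpq : b.repr x 0 ^ 2 + b.repr x 1 ^ 2 ≠ 0 := by
    contrapose! hx
    rw [eq_repr_zero_smul_add_repr_one_smul b hx2 hx3]
    simp [show b.repr x 0 = 0 by nlinarith, show b.repr x 1 = 0 by nlinarith]
  set p := b.repr x 0
  set q := b.repr x 1
  -- `h0`, `h1` say `(y₂ - i y₃) (p + i q) = 0` in `ℂ`; multiply by `p - i q`.
  constructor
  · exact (mul_eq_zero.1 (by linear_combination p * h0 + q * h1 :
      (p ^ 2 + q ^ 2) * b.repr y 2 = 0)).resolve_left hpq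
  · exact (mul_eq_zero.1 (by linear_combination q * h0 - p * h1 :
      (p ^ 2 + q ^ 2) * b.repr y 3 = 0)).resolve_left hpq

end S412

theorem stmt19_general (L : Type*) [LieRing L] [LieAlgebra ℝ L]
    (b : Module.Basis (Fin 4) ℝ L)
    (h31 : ⁅b 2, b 0⁆ = b 0) (h32 : ⁅b 2, b 1⁆ = b 1)
    (h41 : ⁅b 3, b 0⁆ = -b 1) (h42 : ⁅b 3, b 1⁆ = b 0)
    (h12 : ⁅b 0, b 1⁆ = 0) :
    ¬ (commutingGraph ℝ L).Connected := by
  refine commutingGraph_not_connected_of_centralizer_subset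
    {x | b.repr x 2 = 0 ∧ b.repr x 3 = 0} ?_ (x := b 0) (y := b 2) (by simp)
    (LieAlgebra.notMem_center_of_lie_ne_zero_s19 (x := b 2) (by rw [h31]; exact b.ne_zero 0))
    (by simp)
    (LieAlgebra.notMem_center_of_lie_ne_zero_s19 (x := b 0)
      (by rw [← lie_skew, h31, neg_ne_zero]; exact b.ne_zero 0))
  rintro x ⟨hx2, hx3⟩ hx y hxy
  refine repr_two_eq_zero_and_repr_three_eq_zero_of_lie_eq_zero b h31 h32 h41 h42 h12 ?_ hx2 hx3 hxy
  rintro rfl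
  exact hx (LieAlgebra.center ℝ L).zero_mem

/-- for the real solvable Lie algebra `s₄,₁₂`, given by a basis
`e₁, e₂, e₃, e₄` with `⁅e₃,e₁⁆ = e₁`, `⁅e₃,e₂⁆ = e₂`, `⁅e₄,e₁⁆ = -e₂`, `⁅e₄,e₂⁆ = e₁` and
all other brackets of basis vectors zero, the commuting graph is disconnected. -/
theorem stmt19 (L : Type*) [LieRing L] [LieAlgebra ℝ L]
    (b : Module.Basis (Fin 4) ℝ L)
    (h31 : ⁅b 2, b 0⁆ = b 0) (h32 : ⁅b 2, b 1⁆ = b 1)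
    (h41 : ⁅b 3, b 0⁆ = -b 1) (h42 : ⁅b 3, b 1⁆ = b 0)
    (h12 : ⁅b 0, b 1⁆ = 0) (h34 : ⁅b 2, b 3⁆ = 0) :
    ¬ (commutingGraph ℝ L).Connected :=
  stmt19_general L b h31 h32 h41 h42 h12
end
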